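/- In any model H of HST, the condensation map x ↦ x̂ is an ∈-isomorphism of the class S of standard sets onto the condensed subuniverse V; V is a transitive class in H and an ∈-model of ZFC; and every subset of V that is a set of H belongs to V. -/
import Mathlib


/-!
Semantic framework for models of Hrbaček set theory (HST) in the ∈-st-language,
following Kanovei–Reeken, "Isomorphism property in nonstandard extensions of the
ZFC universe".

A model is a type `M` together with a membership relation `mem : M → M → Prop`
and a standardness predicate `stP : M → Prop`.  Formulas of the ∈-st-language
are deeply embedded (`StFormula`), so that axiom schemata can be stated.
All set-theoretic notions (pairs, functions, ordinals, ...) are expressed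
relative to a class `C : M → Prop`, which also yields relativizations
(to the standard universe, the internal universe, inner classes, etc.).
-/

universe u v

namespace HSTF

variable {M : Type u}

def TrueC {M : Type u} : M → Prop := fun _ => True
def FalseC {M : Type u} : M → Prop := fun _ => False

/-! ### Formulas of the ∈-st-language -/

inductive StFormula : ℕ → Type where
  | mem {n} (i j : Fin n) : StFormula n
  | eq {n} (i j : Fin n) : StFormula n
  | st {n} (i : Fin n) : StFormula n
  | not {n} (φ : StFormula n) : StFormula n
  | and {n} (φ ψ : StFormula n) : StFormula n
  | all {n} (φ : StFormula (n + 1)) : StFormula n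

/-- ∈-formulas: formulas in which the standardness predicate does not occur. -/
def StFormula.IsEpsilon : ∀ {n}, StFormula n → Prop
  | _, .mem _ _ => True
  | _, .eq _ _ => True
  | _, .st _ => False
  | _, .not φ => φ.IsEpsilon
  | _, .and φ ψ => φ.IsEpsilon ∧ ψ.IsEpsilon
  | _, .all φ => φ.IsEpsilon

/-- Evaluation of a formula in `(M, mem, stP)`, with all quantifiers
relativized to the class `C`. -/
def EvalIn (mem : M → M → Prop) (stP : M → Prop) (C : M → Prop) :
    ∀ {n}, StFormula n → (Fin n → M) → Prop
  | _, .mem i j, val => mem (val i) (val j)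
  | _, .eq i j, val => val i = val j
  | _, .st i, val => stP (val i)
  | _, .not φ, val => ¬ EvalIn mem stP C φ val
  | _, .and φ ψ, val => EvalIn mem stP C φ val ∧ EvalIn mem stP C ψ val
  | _, .all φ, val => ∀ x, C x → EvalIn mem stP C φ (Fin.snoc val x)

/-! ### Set-theoretic coding, relative to a class `C` -/

section Coding
variable (mem : M → M → Prop) (C : M → Prop)

def EmptyIn (e : M) : Prop := ∀ z, C z → ¬ mem z e

def SingIn (s x : M) : Prop := ∀ z, C z → (mem z s ↔ z = x)

def UPairIn (p x y : M) : Prop := ∀ z, C z → (mem z p ↔ (z = x ∨ z = y))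

/-- `p` is the Kuratowski ordered pair `⟨x, y⟩`, relative to `C`. -/
def OPairIn (p x y : M) : Prop :=
  ∃ s t, C s ∧ C t ∧ SingIn mem C s x ∧ UPairIn mem C t x y ∧ UPairIn mem C p s t

/-- `f(x) = y` for a set-coded function `f` (a set of ordered pairs). -/
def FValIn (f x y : M) : Prop := ∃ p, C p ∧ mem p f ∧ OPairIn mem C p x y

/-- `f` is a (set-coded) function with domain exactly the class `D`. -/
def FuncOnIn (f : M) (D : M → Prop) : Prop :=
  (∀ p, C p → mem p f → ∃ x y, C x ∧ C y ∧ D x ∧ OPairIn mem C p x y) ∧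
  (∀ x, C x → D x → ∃ y, C y ∧ FValIn mem C f x y) ∧
  (∀ x y y', C x → C y → C y' → FValIn mem C f x y → FValIn mem C f x y' → y = y')

def SubIn (x y : M) : Prop := ∀ z, C z → mem z x → mem z y

def TransIn (x : M) : Prop := ∀ y, C y → mem y x → ∀ z, C z → mem z y → mem z x

/-- `s = x ∪ {x}`. -/
def SuccIn (s x : M) : Prop := ∀ z, C z → (mem z s ↔ (mem z x ∨ z = x))

/-- `∈` restricted to `x` is well-founded (in the sense of the model):
every nonempty subset (of the model, in `C`) of `x` has an `∈`-minimal element. -/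
def WFIn (x : M) : Prop :=
  ∀ Y, C Y → SubIn mem C Y x → (∃ w, C w ∧ mem w Y) →
    ∃ w, C w ∧ mem w Y ∧ ∀ u, C u → mem u w → ¬ mem u Y

/-- `x` is an ordinal: a transitive set well-ordered by `∈` (relative to `C`). -/
def OrdIn (x : M) : Prop :=
  TransIn mem C x ∧
  (∀ y z, C y → C z → mem y x → mem z x → (mem y z ∨ y = z ∨ mem z y)) ∧
  (∀ y z w, C y → C z → C w → mem y x → mem z x → mem w x → mem y z → mem z w → mem y w) ∧
  (∀ y, C y → mem y x → ¬ mem y y) ∧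
  WFIn mem C x

/-- `x` is a natural number: an ordinal such that every ordinal `≤ x`
is zero or a successor. -/
def NatIn (x : M) : Prop :=
  OrdIn mem C x ∧ ∀ y, C y → (y = x ∨ mem y x) →
    (EmptyIn mem C y ∨ ∃ z, C z ∧ SuccIn mem C y z)

/-- `x` and `y` are equinumerous via a (set-coded) bijection, relative to `C`. -/
def EquinumIn (x y : M) : Prop :=
  ∃ f, C f ∧ FuncOnIn mem C f (fun z => mem z x) ∧
    (∀ a b w, C a → C b → C w → FValIn mem C f a w → FValIn mem C f b w → a = b) ∧
    (∀ w, C w → (mem w y ↔ ∃ a, C a ∧ mem a x ∧ FValIn mem C f a w))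

def FiniteIn (x : M) : Prop := ∃ n, C n ∧ NatIn mem C n ∧ EquinumIn mem C x n

/-- `x` is a cardinal: an ordinal not equinumerous to any smaller ordinal. -/
def CardinalIn (x : M) : Prop :=
  OrdIn mem C x ∧ ∀ y, C y → mem y x → ¬ EquinumIn mem C x y

/-- The set `r` (of ordered pairs) well-orders the set `x`, relative to `C`. -/
def WOrdersIn (r x : M) : Prop :=
  (∀ a b, C a → C b → mem a x → mem b x → a ≠ b →
    ((∃ p, C p ∧ mem p r ∧ OPairIn mem C p a b) ∨ (∃ p, C p ∧ mem p r ∧ OPairIn mem C p b a))) ∧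
  (∀ a, C a → mem a x → ¬ ∃ p, C p ∧ mem p r ∧ OPairIn mem C p a a) ∧
  (∀ a b c, C a → C b → C c →
    (∃ p, C p ∧ mem p r ∧ OPairIn mem C p a b) → (∃ p, C p ∧ mem p r ∧ OPairIn mem C p b c) →
    (∃ p, C p ∧ mem p r ∧ OPairIn mem C p a c)) ∧
  (∀ Y, C Y → SubIn mem C Y x → (∃ w, C w ∧ mem w Y) →
    ∃ a, C a ∧ mem a Y ∧ ∀ b, C b → mem b Y → b ≠ a → ∃ p, C p ∧ mem p r ∧ OPairIn mem C p a b)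

def WOableIn (x : M) : Prop := ∃ r, C r ∧ WOrdersIn mem C r x

end Coding

/-! ### ZFC, relativized to a class -/

/-- The class `C` of `(M, mem)` is a model of ZFC (with the Separation and
Collection schemata for ∈-formulas, and Choice in the form of the
well-ordering principle). -/
structure ZFCModelIn (mem : M → M → Prop) (C : M → Prop) : Prop where
  nonemp : ∃ x, C x
  ext : ∀ x y, C x → C y → (∀ z, C z → (mem z x ↔ mem z y)) → x = y
  pair : ∀ x y, C x → C y → ∃ p, C p ∧ UPairIn mem C p x y
  union : ∀ x, C x → ∃ u, C u ∧ ∀ z, C z → (mem z u ↔ ∃ y, C y ∧ mem y x ∧ mem z y)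
  power : ∀ x, C x → ∃ pw, C pw ∧ ∀ z, C z → (mem z pw ↔ SubIn mem C z x)
  infinity : ∃ w, C w ∧ (∃ e, C e ∧ mem e w ∧ EmptyIn mem C e) ∧
    ∀ x, C x → mem x w → ∃ s, C s ∧ mem s w ∧ SuccIn mem C s x
  foundation : ∀ x, C x → (∃ y, C y ∧ mem y x) →
    ∃ y, C y ∧ mem y x ∧ ∀ z, C z → mem z y → ¬ mem z x
  separation : ∀ {n} (φ : StFormula (n + 1)), φ.IsEpsilon →
    ∀ val : Fin n → M, (∀ i, C (val i)) → ∀ x, C x →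
      ∃ s, C s ∧ ∀ z, C z → (mem z s ↔ mem z x ∧ EvalIn mem FalseC C φ (Fin.snoc val z))
  collection : ∀ {n} (φ : StFormula (n + 2)), φ.IsEpsilon →
    ∀ val : Fin n → M, (∀ i, C (val i)) → ∀ x, C x →
      ∃ B, C B ∧ ∀ a, C a → mem a x →
        (∃ b, C b ∧ EvalIn mem FalseC C φ (Fin.snoc (Fin.snoc val a) b)) →
        ∃ b, C b ∧ mem b B ∧ EvalIn mem FalseC C φ (Fin.snoc (Fin.snoc val a) b)
  choice_wo : ∀ x, C x → ∃ r, C r ∧ WOrdersIn mem C r x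

/-! ### HST -/

/-- `x` is internal: a member of some standard set. -/
def Internal (mem : M → M → Prop) (stP : M → Prop) (x : M) : Prop := ∃ y, stP y ∧ mem x y

/-- `x` is a set of standard size: the image of `σS = {z ∈ S : st z}`
(for some standard `S`) under some (set-coded) function. -/
def SSize (mem : M → M → Prop) (stP : M → Prop) (x : M) : Prop :=
  ∃ S f, stP S ∧ FuncOnIn mem TrueC f (fun z => stP z ∧ mem z S) ∧
    ∀ y, mem y x ↔ ∃ a, stP a ∧ mem a S ∧ FValIn mem TrueC f a y

/-- `(M, mem, stP)` is a model of Hrbaček set theory HST. -/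
structure HSTModel (mem : M → M → Prop) (stP : M → Prop) : Prop where
  /-- 1a: the standard universe models ZFC (the relativization `Φ^st` of every
  ZFC axiom `Φ`). -/
  zfc_st : ZFCModelIn mem stP
  /-- 1b: Transfer for ∈-formulas with standard parameters, between the
  standard and the internal universe. -/
  transfer : ∀ {n} (φ : StFormula (n + 1)), φ.IsEpsilon →
    ∀ val : Fin n → M, (∀ i, stP (val i)) →
      ((∃ x, Internal mem stP x ∧ EvalIn mem FalseC (Internal mem stP) φ (Fin.snoc val x)) ↔
       (∃ x, stP x ∧ EvalIn mem FalseC (Internal mem stP) φ (Fin.snoc val x)))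
  /-- 1c: elements of internal sets are internal. -/
  internal_trans : ∀ x y, Internal mem stP x → mem y x → Internal mem stP y
  /-- 2: Standardization. -/
  standardization : ∀ X, ∃ Y, stP Y ∧ ∀ z, stP z → (mem z Y ↔ mem z X)
  /-- 3: Extensionality. -/
  ext : ∀ x y, (∀ z, mem z x ↔ mem z y) → x = y
  /-- 3: Pairing. -/
  pairing : ∀ x y, ∃ p, UPairIn mem TrueC p x y
  /-- 3: Union. -/
  union : ∀ x, ∃ u, ∀ z, mem z u ↔ ∃ y, mem y x ∧ mem z y
  /-- 3: Infinity. -/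
  infinity : ∃ w, (∃ e, mem e w ∧ EmptyIn mem TrueC e) ∧
    ∀ x, mem x w → ∃ s, mem s w ∧ SuccIn mem TrueC s x
  /-- 3: Separation for all ∈-st-formulas. -/
  separation : ∀ {n} (φ : StFormula (n + 1)) (val : Fin n → M) (x : M),
    ∃ s, ∀ z, mem z s ↔ (mem z x ∧ EvalIn mem stP TrueC φ (Fin.snoc val z))
  /-- 3: Collection for all ∈-st-formulas. -/
  collection : ∀ {n} (φ : StFormula (n + 2)) (val : Fin n → M) (x : M),
    ∃ B, ∀ a, mem a x → (∃ b, EvalIn mem stP TrueC φ (Fin.snoc (Fin.snoc val a) b)) →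
      ∃ b, mem b B ∧ EvalIn mem stP TrueC φ (Fin.snoc (Fin.snoc val a) b)
  /-- 3: Replacement for all ∈-st-formulas. -/
  replacement : ∀ {n} (φ : StFormula (n + 2)) (val : Fin n → M) (x : M),
    (∀ a b b', EvalIn mem stP TrueC φ (Fin.snoc (Fin.snoc val a) b) →
      EvalIn mem stP TrueC φ (Fin.snoc (Fin.snoc val a) b') → b = b') →
    ∃ B, ∀ b, mem b B ↔ ∃ a, mem a x ∧ EvalIn mem stP TrueC φ (Fin.snoc (Fin.snoc val a) b)
  /-- 4: Weak Regularity. -/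
  weak_reg : ∀ X, (∃ x, mem x X) →
    ∃ x, mem x X ∧ ∀ y, mem y x → mem y X → Internal mem stP y
  /-- 5: Saturation for standard size families of internal sets. -/
  saturation : ∀ X, SSize mem stP X → (∀ Y, mem Y X → Internal mem stP Y) →
    (∀ X', (∃ Y, mem Y X') → SubIn mem TrueC X' X → FiniteIn mem TrueC X' →
      ∃ z, ∀ Y, mem Y X' → mem z Y) →
    ∃ z, ∀ Y, mem Y X → mem z Y
  /-- 6: Choice for families indexed by a set of standard size. -/
  ss_choice : ∀ X, SSize mem stP X → (∀ x, mem x X → ∃ y, mem y x) →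
    ∃ f, FuncOnIn mem TrueC f (fun x => mem x X) ∧
      ∀ x y, mem x X → FValIn mem TrueC f x y → mem y x
  /-- 6: Dependent Choice. -/
  dep_choice : ∀ X R x0, mem x0 X →
    (∀ x, mem x X → ∃ y, mem y X ∧ ∃ q, mem q R ∧ OPairIn mem TrueC q x y) →
    ∃ w f, (∀ z, mem z w ↔ NatIn mem TrueC z) ∧ FuncOnIn mem TrueC f (fun k => mem k w) ∧
      (∀ k y, mem k w → FValIn mem TrueC f k y → mem y X) ∧
      (∀ e, EmptyIn mem TrueC e → mem e w → FValIn mem TrueC f e x0) ∧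
      (∀ k s y y', mem k w → mem s w → SuccIn mem TrueC s k →
        FValIn mem TrueC f k y → FValIn mem TrueC f s y' →
        ∃ q, mem q R ∧ OPairIn mem TrueC q y y')

/-! ### BST -/

/-- The class `C` (with the standardness predicate `stP`) is a model of
bounded set theory BST. -/
structure BSTModelIn (mem : M → M → Prop) (stP : M → Prop) (C : M → Prop) : Prop where
  /-- ZFC in the ∈-language. -/
  zfc : ZFCModelIn mem C
  /-- standard sets belong to the universe. -/
  st_sub : ∀ x, stP x → C x
  /-- Bounded Idealization. -/
  bdd_idealization : ∀ {n} (φ : StFormula (n + 2)), φ.IsEpsilon →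
    ∀ val : Fin n → M, (∀ i, C (val i)) → ∀ X, stP X →
      ((∀ A, stP A → FiniteIn mem C A →
          ∃ x, C x ∧ mem x X ∧ ∀ a, C a → mem a A →
            EvalIn mem stP C φ (Fin.snoc (Fin.snoc val x) a)) ↔
       (∃ x, C x ∧ mem x X ∧ ∀ a, stP a →
          EvalIn mem stP C φ (Fin.snoc (Fin.snoc val x) a)))
  /-- Standardization for all ∈-st-formulas. -/
  standardization : ∀ {n} (φ : StFormula (n + 1)) (val : Fin n → M), (∀ i, C (val i)) →
    ∀ X, stP X → ∃ Y, stP Y ∧ ∀ x, stP x →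
      (mem x Y ↔ (mem x X ∧ EvalIn mem stP C φ (Fin.snoc val x)))
  /-- Transfer. -/
  transfer : ∀ {n} (φ : StFormula (n + 1)), φ.IsEpsilon →
    ∀ val : Fin n → M, (∀ i, stP (val i)) →
      (∃ x, C x ∧ EvalIn mem FalseC C φ (Fin.snoc val x)) →
      ∃ x, stP x ∧ EvalIn mem FalseC C φ (Fin.snoc val x)
  /-- Boundedness. -/
  boundedness : ∀ x, C x → ∃ X, stP X ∧ mem x X

/-! ### Condensation -/

/-- `h` is the condensation map: `h x = {h y : y ∈ x, y standard}` for standard `x`. -/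
def Condenses (mem : M → M → Prop) (stP : M → Prop) (h : M → M) : Prop :=
  ∀ x, stP x → ∀ z, mem z (h x) ↔ ∃ y, stP y ∧ mem y x ∧ z = h y

/-- The condensed subuniverse `V = {h x : x standard}`. -/
def CondV (stP : M → Prop) (h : M → M) (z : M) : Prop := ∃ x, stP x ∧ z = h x

/-! ### Internally presented structures and the isomorphism property -/

/-- `t` codes the tuple `l` (as an iterated Kuratowski pair). -/
def TupCode (mem : M → M → Prop) : List M → M → Prop
  | [], t => ∀ z, ¬ mem z t
  | x :: l, t => ∃ r, OPairIn mem TrueC t x r ∧ TupCode mem l r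

/-- `(A, R)` is an internally presented structure of the (relational) language
with symbols `ι` and arities `ar`: the base set `A` and each interpretation
`R s` (a set of `ar s`-tuples from `A`) is internal. -/
def IntPresented (mem : M → M → Prop) (stP : M → Prop) {ι : Type v} (ar : ι → ℕ)
    (A : M) (R : ι → M) : Prop :=
  Internal mem stP A ∧ ∀ s : ι, Internal mem stP (R s) ∧
    ∀ t, mem t (R s) → ∃ l : List M, l.length = ar s ∧ (∀ x ∈ l, mem x A) ∧ TupCode mem l t

/-- First-order formulas of a relational language. -/
inductive FOF (ι : Type v) (ar : ι → ℕ) : ℕ → Type v where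
  | rel {n} (s : ι) (ts : Fin (ar s) → Fin n) : FOF ι ar n
  | eq {n} (i j : Fin n) : FOF ι ar n
  | not {n} (φ : FOF ι ar n) : FOF ι ar n
  | and {n} (φ ψ : FOF ι ar n) : FOF ι ar n
  | all {n} (φ : FOF ι ar (n + 1)) : FOF ι ar n

/-- Satisfaction in an internally presented structure. -/
def FOSat (mem : M → M → Prop) {ι : Type v} {ar : ι → ℕ} (A : M) (R : ι → M) :
    ∀ {n}, FOF ι ar n → (Fin n → M) → Prop
  | _, .rel s ts, val => ∃ t, TupCode mem (List.ofFn fun k => val (ts k)) t ∧ mem t (R s)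
  | _, .eq i j, val => val i = val j
  | _, .not φ, val => ¬ FOSat mem A R φ val
  | _, .and φ ψ, val => FOSat mem A R φ val ∧ FOSat mem A R ψ val
  | _, .all φ, val => ∀ x, mem x A → FOSat mem A R φ (Fin.snoc val x)

/-- Elementary equivalence of the two structures. -/
def ElemEq (mem : M → M → Prop) {ι : Type v} (ar : ι → ℕ)
    (A : M) (RA : ι → M) (B : M) (RB : ι → M) : Prop :=
  ∀ φ : FOF ι ar 0, (FOSat mem A RA φ Fin.elim0 ↔ FOSat mem B RB φ Fin.elim0)

/-- The two structures are isomorphic (via an isomorphism which is a set of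
the model). -/
def IsoIn (mem : M → M → Prop) {ι : Type v}
    (A : M) (RA : ι → M) (B : M) (RB : ι → M) : Prop :=
  ∃ f : M, FuncOnIn mem TrueC f (fun x => mem x A) ∧
    (∀ x y, mem x A → FValIn mem TrueC f x y → mem y B) ∧
    (∀ x x' y, FValIn mem TrueC f x y → FValIn mem TrueC f x' y → x = x') ∧
    (∀ y, mem y B → ∃ x, mem x A ∧ FValIn mem TrueC f x y) ∧
    (∀ (s : ι) (l l' : List M), (∀ x ∈ l, mem x A) →
      List.Forall₂ (FValIn mem TrueC f) l l' →
      ∀ t t', TupCode mem l t → TupCode mem l' t' → (mem t (RA s) ↔ mem t' (RB s)))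

/-- The index type `ι` is of standard size: it is equinumerous (externally)
with `σS = {x ∈ S : st x}` for some standard `S`. -/
def SSizeIndex (mem : M → M → Prop) (stP : M → Prop) (ι : Type v) : Prop :=
  ∃ S : M, stP S ∧ ∃ e : ι → M, Function.Injective e ∧
    (∀ i, stP (e i) ∧ mem (e i) S) ∧ (∀ x, stP x → mem x S → ∃ i, e i = x)

/-- The isomorphism property IP: any two internally presented elementarily
equivalent structures of a language with (standard size)-many symbols are
isomorphic. -/
def IPProp (mem : M → M → Prop) (stP : M → Prop) : Prop :=
  ∀ (ι : Type u) (ar : ι → ℕ), SSizeIndex mem stP ι →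
    ∀ (A : M) (RA : ι → M) (B : M) (RB : ι → M),
      IntPresented mem stP ar A RA → IntPresented mem stP ar B RB →
      ElemEq mem ar A RA B RB → IsoIn mem A RA B RB

/-! ### Partially ordered sets inside the model; closure and distributivity -/

section PO
variable (mem : M → M → Prop)

/-- `p ≤ q` according to the set `R` of ordered pairs. -/
def LeVia (R p q : M) : Prop := ∃ z, mem z R ∧ OPairIn mem TrueC z p q

/-- `⟨P; R⟩` is a partially ordered set (coded in the model). -/
def IsPOOn (P R : M) : Prop :=
  (∀ z, mem z R → ∃ p q, mem p P ∧ mem q P ∧ OPairIn mem TrueC z p q) ∧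
  (∀ p, mem p P → LeVia mem R p p) ∧
  (∀ p q, LeVia mem R p q → LeVia mem R q p → p = q) ∧
  (∀ p q r, LeVia mem R p q → LeVia mem R q r → LeVia mem R p r)

/-- `⟨P; R⟩` is `κ`-closed: every decreasing `κ`-sequence (a set-coded function
on `κ`) has a lower bound. -/
def KClosed (κ P R : M) : Prop :=
  ∀ f, FuncOnIn mem TrueC f (fun α => mem α κ) →
    (∀ α y, mem α κ → FValIn mem TrueC f α y → mem y P) →
    (∀ α β u w, mem α β → mem β κ → FValIn mem TrueC f α u → FValIn mem TrueC f β w →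
      LeVia mem R w u) →
    ∃ p, mem p P ∧ ∀ α u, mem α κ → FValIn mem TrueC f α u → LeVia mem R p u

/-- `Y` is an open dense subset of `⟨P; R⟩`. -/
def OpenDenseIn (P R Y : M) : Prop :=
  (∀ y, mem y Y → mem y P) ∧
  (∀ p, mem p P → ∃ q, mem q Y ∧ LeVia mem R q p) ∧
  (∀ p q, mem p P → mem q Y → LeVia mem R p q → mem p Y)

/-- `⟨P; R⟩` is `κ`-distributive: the intersection of `κ`-many open dense
subsets is dense. -/
def KDistrib (κ P R : M) : Prop :=
  ∀ Df, FuncOnIn mem TrueC Df (fun α => mem α κ) →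
    (∀ α Y, mem α κ → FValIn mem TrueC Df α Y → OpenDenseIn mem P R Y) →
    ∀ p, mem p P → ∃ q, mem q P ∧ LeVia mem R q p ∧
      ∀ α Y, mem α κ → FValIn mem TrueC Df α Y → mem q Y

/-- For each cardinal `κ`, every `κ`-closed p.o. set is `κ`-distributive. -/
def KClosedDistrib : Prop :=
  ∀ κ, CardinalIn mem TrueC κ → ∀ P R, IsPOOn mem P R → KClosed mem κ P R → KDistrib mem κ P R

/-- `⟨P; R⟩` is standard size distributive: `κ`-distributive for every cardinal. -/
def SSDistribOn (P R : M) : Prop :=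
  ∀ κ, CardinalIn mem TrueC κ → KDistrib mem κ P R

end PO

/-! ### The class L[I] of sets constructible from internal sets -/

section LI
variable (mem : M → M → Prop) (stP : M → Prop)

/-- `n` is a natural number of the internal universe. -/
def INat (n : M) : Prop := Internal mem stP n ∧ NatIn mem (Internal mem stP) n

/-- `t` is an internal finite sequence: an internal function whose domain is a
natural number of the internal universe. -/
def IsISeq (t : M) : Prop :=
  Internal mem stP t ∧ ∃ n, INat mem stP n ∧ FuncOnIn mem TrueC t (fun i => mem i n)

/-- `T` is a tree: a nonempty set of internal finite sequences closed under
initial segments. -/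
def IsTreeSet (T : M) : Prop :=
  (∃ t, mem t T) ∧ (∀ t, mem t T → IsISeq mem stP t) ∧
  (∀ t, mem t T → ∀ t', IsISeq mem stP t' → SubIn mem TrueC t' t → mem t' T)

/-- `t` is a `⊆`-maximal element of `T`. -/
def MaxIn (T t : M) : Prop := mem t T ∧ ∀ s, mem s T → SubIn mem TrueC t s → s = t

/-- `T` is well-founded: every nonempty subset of `T` has a `⊆`-maximal element. -/
def WfTreeSet (T : M) : Prop :=
  ∀ T', (∃ t, mem t T') → SubIn mem TrueC T' T →
    ∃ t, mem t T' ∧ ∀ s, mem s T' → SubIn mem TrueC t s → s = t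

/-- `s = t ⌢ a`. -/
def IsConcat (s t a : M) : Prop :=
  ∃ n n', INat mem stP n ∧ SuccIn mem TrueC n' n ∧
    FuncOnIn mem TrueC t (fun i => mem i n) ∧ FuncOnIn mem TrueC s (fun i => mem i n') ∧
    (∀ i w, mem i n → (FValIn mem TrueC t i w ↔ FValIn mem TrueC s i w)) ∧
    FValIn mem TrueC s n a

/-- `p` is of the form `⟨A, B, η⟩` with `A, B` standard and `η` an internal
function on `A × B`. -/
def CpForm (p A B η : M) : Prop :=
  (∃ r, OPairIn mem TrueC p A r ∧ OPairIn mem TrueC r B η) ∧ stP A ∧ stP B ∧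
    Internal mem stP η ∧
    FuncOnIn mem TrueC η (fun q => ∃ a b, mem a A ∧ mem b B ∧ OPairIn mem TrueC q a b)

/-- `z = C_p = ⋃_{a ∈ σA} ⋂_{b ∈ σB} η(a,b)` (and `z = ∅` if `p` is not of
the appropriate form). -/
def IsCp (p z : M) : Prop :=
  (∃ A B η, CpForm mem stP p A B η ∧
    ∀ x, mem x z ↔ ∃ a, stP a ∧ mem a A ∧ ∀ b, stP b → mem b B →
      ∃ q w, OPairIn mem TrueC q a b ∧ FValIn mem TrueC η q w ∧ mem x w) ∨
  ((¬ ∃ A B η, CpForm mem stP p A B η) ∧ ∀ x, ¬ mem x z)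

/-- `z` is an elementary external set. -/
def EE (z : M) : Prop := ∃ p, Internal mem stP p ∧ IsCp mem stP p z

/-- `⟨T, F⟩` is a wf pair with `T, F ∈ E`: `T` is a wf tree and
`F : Max T → I`. -/
def IsWfPairHC (T F : M) : Prop :=
  EE mem stP T ∧ EE mem stP F ∧ IsTreeSet mem stP T ∧ WfTreeSet mem T ∧
  FuncOnIn mem TrueC F (MaxIn mem T) ∧
  (∀ t y, FValIn mem TrueC F t y → Internal mem stP y)

/-- `z ∈ L[I]`: `z = F[T]` for some wf pair `⟨T, F⟩ ∈ H`, witnessed by an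
assembling function `g` (so `z = F_T(Λ)`). -/
def LIclass (z : M) : Prop :=
  ∃ T F, IsWfPairHC mem stP T F ∧ ∃ g : M → M,
    (∀ t, MaxIn mem T t → FValIn mem TrueC F t (g t)) ∧
    (∀ t, mem t T → ¬ MaxIn mem T t →
      ∀ w, mem w (g t) ↔ ∃ s, mem s T ∧ (∃ a, IsConcat mem stP s t a) ∧ w = g s) ∧
    ∃ e, (∀ w, ¬ mem w e) ∧ mem e T ∧ z = g e

end LI

end HSTF

namespace HSTF

variable {M : Type u}

/-! ### Forcing over a model of HST -/

/-- `H` is well-founded over `I`: the ordinals of the model are well-founded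
in the wider universe. -/
def WfOverI (mem : M → M → Prop) : Prop :=
  WellFounded (fun x y : M => OrdIn mem TrueC x ∧ OrdIn mem TrueC y ∧ mem x y)

/-- `a = x̆ = ⟨0, x⟩`, the canonical name for `x`. -/
def IsBreve (mem : M → M → Prop) (a x : M) : Prop :=
  ∃ e, (∀ z, ¬ mem z e) ∧ OPairIn mem TrueC a e x

/-- `a` is a `P`-name (for the class `Pp` of forcing conditions):
either a canonical name `x̆`, or a set of pairs `⟨p, b⟩` with `p` a condition
and `b` a name. -/
inductive IsName (mem : M → M → Prop) (Pp : M → Prop) : M → Prop where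
  | ground (a x : M) (h : IsBreve mem a x) : IsName mem Pp a
  | mk (a : M) (pf bf : M → M)
      (h : ∀ z, mem z a → Pp (pf z) ∧ OPairIn mem TrueC z (pf z) (bf z))
      (hrec : ∀ z, mem z a → IsName mem Pp (bf z)) : IsName mem Pp a

/-- External values of names: either an element of the model (an atom) or a
set of previously constructed values. -/
inductive GVal (M : Type u) : Type (u + 1) where
  | atom (x : M) : GVal M
  | mk (ι : Type u) (f : ι → GVal M) : GVal M

/-- The value `v` is extensionally equal to (the model element) `x`. -/
def AEq (mem : M → M → Prop) : M → GVal M → Prop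
  | x, .atom y => x = y
  | x, .mk _ f => (∀ y, mem y x → ∃ i, AEq mem y (f i)) ∧ (∀ i, ∃ y, mem y x ∧ AEq mem y (f i))

/-- Extensional equality of values (identifying a value with a model element
having the same members). -/
def GEquiv (mem : M → M → Prop) : GVal M → GVal M → Prop
  | .atom x, v => AEq mem x v
  | .mk ι f, .atom y => AEq mem y (.mk ι f)
  | .mk _ f, .mk _ g => (∀ i, ∃ j, GEquiv mem (f i) (g j)) ∧ (∀ j, ∃ i, GEquiv mem (f i) (g j))

/-- Membership between values. -/
def GMem (mem : M → M → Prop) : GVal M → GVal M → Prop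
  | u, .atom x => ∃ y, mem y x ∧ GEquiv mem u (.atom y)
  | u, .mk _ f => ∃ i, GEquiv mem u (f i)

/-- `u` is the value `a[G]` of the name `a` under the generic class `G`. -/
inductive ValRel (mem : M → M → Prop) (Pp G : M → Prop) : M → GVal M → Prop where
  | ground (a x : M) (h : IsBreve mem a x) : ValRel mem Pp G a (GVal.atom x)
  | proper (a : M) (ι : Type u) (f : ι → GVal M)
      (hng : ¬ ∃ x, IsBreve mem a x)
      (sel : M → M → M → ι)
      (h1 : ∀ z p b, mem z a → Pp p → G p → OPairIn mem TrueC z p b →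
        ValRel mem Pp G b (f (sel z p b)))
      (zf pf bf : ι → M)
      (h2 : ∀ i, mem (zf i) a ∧ Pp (pf i) ∧ G (pf i) ∧
        OPairIn mem TrueC (zf i) (pf i) (bf i))
      (h3 : ∀ i, ValRel mem Pp G (bf i) (f i)) :
      ValRel mem Pp G a (GVal.mk ι f)

/-- Carrier of the generic extension `H[G]` (before extensional collapse). -/
def HGCarrier (mem : M → M → Prop) (Pp G : M → Prop) : Type (u + 1) :=
  {w : GVal M // ∃ a, IsName mem Pp a ∧ ValRel mem Pp G a w}

/-- The generic extension `H[G] = {a[G] : a a name}`, extensional values being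
identified. -/
def HGType (mem : M → M → Prop) (Pp G : M → Prop) : Type (u + 1) :=
  Quot (fun u w : HGCarrier mem Pp G => GEquiv mem u.1 w.1)

/-- Membership `∈_G` of the extension. -/
def QMem (mem : M → M → Prop) (Pp G : M → Prop) (a b : HGType mem Pp G) : Prop :=
  ∃ u w : HGCarrier mem Pp G, a = Quot.mk _ u ∧ b = Quot.mk _ w ∧ GMem mem u.1 w.1

/-- Standardness in the extension. -/
def QSt (mem : M → M → Prop) (stP Pp G : M → Prop) (a : HGType mem Pp G) : Prop :=
  ∃ u : HGCarrier mem Pp G, a = Quot.mk _ u ∧ ∃ s, stP s ∧ GEquiv mem u.1 (GVal.atom s)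

/-- `b` (an element of `H[G]`) is the value `a[G]` of the name `a`. -/
def Represents (mem : M → M → Prop) (Pp G : M → Prop) (b : HGType mem Pp G) (a : M) : Prop :=
  ∃ u : HGCarrier mem Pp G, b = Quot.mk _ u ∧ ValRel mem Pp G a u.1

/-- `G` is generic over the model, for the conditions `Pp` ordered by `ple`:
upward closed, directed, and meeting every dense subset belonging to the model. -/
def GenericOver (mem : M → M → Prop) (Pp : M → Prop) (ple : M → M → Prop) (G : M → Prop) :
    Prop :=
  (∀ p, G p → Pp p) ∧
  (∀ p q, G p → Pp q → ple p q → G q) ∧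
  (∀ p q, G p → G q → ∃ r, G r ∧ ple r p ∧ ple r q) ∧
  (∀ D : M, (∀ z, mem z D → Pp z) → (∀ p, Pp p → ∃ q, mem q D ∧ ple q p) →
    ∃ q, G q ∧ mem q D)

/-- The auxiliary relation `p ⊩* b ∈ a`. -/
def SFo (mem : M → M → Prop) (Pp : M → Prop) (ple : M → M → Prop) (p b a : M) : Prop :=
  (∃ x, IsBreve mem a x ∧ ∃ y, mem y x ∧ IsBreve mem b y) ∨
  ((¬ ∃ x, IsBreve mem a x) ∧ ∃ q z, Pp q ∧ ple p q ∧ mem z a ∧ OPairIn mem TrueC z q b)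

/-- Forcing for atomic formulas: `AFo _ _ _ true p a b` means `p ⊩ a = b`,
and `AFo _ _ _ false p b a` means `p ⊩ b ∈ a`. -/
inductive AFo (mem : M → M → Prop) (Pp : M → Prop) (ple : M → M → Prop) :
    Bool → M → M → M → Prop where
  | breveEq (p a b x y : M) (ha : IsBreve mem a x) (hb : IsBreve mem b y) (hxy : x = y) :
      AFo mem Pp ple true p a b
  | breveMem (p b a x y : M) (hb : IsBreve mem b y) (ha : IsBreve mem a x) (hm : mem y x) :
      AFo mem Pp ple false p b a
  | eqI (p a b : M)
      (h1 : ∀ q x, Pp q → ple q p → SFo mem Pp ple q x a → AFo mem Pp ple false q x b)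
      (h2 : ∀ q y, Pp q → ple q p → SFo mem Pp ple q y b → AFo mem Pp ple false q y a) :
      AFo mem Pp ple true p a b
  | memI (p b a : M) (rf zf : M → M)
      (h1 : ∀ q, Pp q → ple q p → Pp (rf q) ∧ ple (rf q) q ∧ SFo mem Pp ple (rf q) (zf q) a)
      (h2 : ∀ q, Pp q → ple q p → AFo mem Pp ple true (rf q) b (zf q)) :
      AFo mem Pp ple false p b a

/-- The forcing relation `p ⊩ Φ`, for a formula with names as parameters. -/
def Fo (mem : M → M → Prop) (stP : M → Prop) (Pp : M → Prop) (ple : M → M → Prop) :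
    ∀ {n}, M → StFormula n → (Fin n → M) → Prop
  | _, p, .mem i j, val => AFo mem Pp ple false p (val i) (val j)
  | _, p, .eq i j, val => AFo mem Pp ple true p (val i) (val j)
  | _, p, .st i, val => ∀ q, Pp q → ple q p → ∃ r, Pp r ∧ ple r q ∧
      ∃ s b, stP s ∧ IsBreve mem b s ∧ AFo mem Pp ple true r (val i) b
  | _, p, .not φ, val => ∀ q, Pp q → ple q p → ¬ Fo mem stP Pp ple q φ val
  | _, p, .and φ ψ, val => Fo mem stP Pp ple p φ val ∧ Fo mem stP Pp ple p ψ val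
  | _, p, .all φ, val => ∀ a, IsName mem Pp a → Fo mem stP Pp ple p φ (Fin.snoc val a)

/-! ### The type-theoretic extension L^∞ and the forcing P_{LAB} -/

/-- Types of the type-theoretic extension: `0` and `τ(l₁, …, l_k)`. -/
inductive TType : Type where
  | zero : TType
  | tau (l : List TType) : TType

mutual
/-- `x` is an object of type `l` over the internal set `D`. -/
def ObjType (mem : M → M → Prop) (intl : M → Prop) (D : M) : TType → M → Prop
  | .zero, x => mem x D
  | .tau ls, x => intl x ∧ ∀ z, mem z x → ObjTuple mem intl D ls z
/-- `z` codes a tuple of objects of the given types over `D`. -/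
def ObjTuple (mem : M → M → Prop) (intl : M → Prop) (D : M) : List TType → M → Prop
  | [], z => ∀ w, ¬ mem w z
  | t :: ts, z => ∃ y r, OPairIn mem TrueC z y r ∧ ObjType mem intl D t y ∧
      ObjTuple mem intl D ts r
end

mutual
/-- The canonical extension `p^l` of an internal bijection `p` to objects of
type `l`: `PExt mem intl p l x y` means `p^l(x) = y`. -/
def PExt (mem : M → M → Prop) (intl : M → Prop) (p : M) : TType → M → M → Prop
  | .zero, x, y => FValIn mem TrueC p x y
  | .tau ls, x, y => intl y ∧
      (∀ z, mem z x → ∃ w, mem w y ∧ PExtTuple mem intl p ls z w) ∧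
      (∀ w, mem w y → ∃ z, mem z x ∧ PExtTuple mem intl p ls z w)
def PExtTuple (mem : M → M → Prop) (intl : M → Prop) (p : M) : List TType → M → M → Prop
  | [], z, w => (∀ u, ¬ mem u z) ∧ (∀ u, ¬ mem u w)
  | t :: ts, z, w => ∃ x r x' r', OPairIn mem TrueC z x r ∧ OPairIn mem TrueC w x' r' ∧
      PExt mem intl p t x x' ∧ PExtTuple mem intl p ts r r'
end

/-- Formulas of the type-theoretic extension `L^∞` of the language with symbols
`ι`; `m` counts the `L`-variables, `Γ` is the context of typed variables. -/
inductive LIF (ι : Type v) : ℕ → List TType → Type v where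
  | rel {m Γ} (s : ι) (k : ℕ) (ts : Fin k → Fin m) : LIF ι m Γ
  | eqL {m Γ} (i j : Fin m) : LIF ι m Γ
  | eqT {m Γ} (i : Fin m) (j : Fin Γ.length) (h : Γ.get j = TType.zero) : LIF ι m Γ
  | app {m Γ} (f : Fin Γ.length) (args : List (Fin Γ.length))
      (h : Γ.get f = TType.tau (args.map Γ.get)) : LIF ι m Γ
  | not {m Γ} (φ : LIF ι m Γ) : LIF ι m Γ
  | and {m Γ} (φ ψ : LIF ι m Γ) : LIF ι m Γ
  | allL {m Γ} (φ : LIF ι (m + 1) Γ) : LIF ι m Γ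
  | allT {m Γ} (t : TType) (φ : LIF ι m (t :: Γ)) : LIF ι m Γ

/-- Satisfaction of an `L^∞`-formula in the structure `A[D]` (base set `Amb`,
typed domains over `D`, interpretations `R`). -/
def SatInf {ι : Type v} (mem : M → M → Prop) (intl : M → Prop) (Amb D : M) (R : ι → M) :
    ∀ {m Γ}, LIF ι m Γ → (Fin m → M) → (Fin Γ.length → M) → Prop
  | _, _, .rel s _ ts, vL, _ => ∃ t, TupCode mem (List.ofFn fun i => vL (ts i)) t ∧ mem t (R s)
  | _, _, .eqL i j, vL, _ => vL i = vL j
  | _, _, .eqT i j _, vL, vT => vL i = vT j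
  | _, _, .app f args _, _, vT => ∃ t, TupCode mem (args.map vT) t ∧ mem t (vT f)
  | _, _, .not φ, vL, vT => ¬ SatInf mem intl Amb D R φ vL vT
  | _, _, .and φ ψ, vL, vT => SatInf mem intl Amb D R φ vL vT ∧ SatInf mem intl Amb D R ψ vL vT
  | _, _, .allL φ, vL, vT => ∀ x, mem x Amb → SatInf mem intl Amb D R φ (Fin.cons x vL) vT
  | _, _, .allT t φ, vL, vT => ∀ x, ObjType mem intl D t x →
      SatInf mem intl Amb D R φ vL (Fin.cons x vT)

/-- `p` is a condition of the forcing `P_{LAB}` with domain `D` and range `E`: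
an internal 1-1 map of `D ⊆ A` onto `E ⊆ B` preserving all closed
`L^∞`-formulas with parameters in `D^∞`. -/
def PCondOn (mem : M → M → Prop) (stP : M → Prop) {ι : Type v}
    (A B : M) (RA RB : ι → M) (D E p : M) : Prop :=
  Internal mem stP p ∧ Internal mem stP D ∧ Internal mem stP E ∧
  SubIn mem TrueC D A ∧ SubIn mem TrueC E B ∧
  FuncOnIn mem TrueC p (fun x => mem x D) ∧
  (∀ x x' y, FValIn mem TrueC p x y → FValIn mem TrueC p x' y → x = x') ∧
  (∀ y, mem y E ↔ ∃ x, mem x D ∧ FValIn mem TrueC p x y) ∧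
  (∀ (Γ : List TType) (φ : LIF ι 0 Γ) (vT wT : Fin Γ.length → M),
    (∀ j, ObjType mem (Internal mem stP) D (Γ.get j) (vT j)) →
    (∀ j, PExt mem (Internal mem stP) p (Γ.get j) (vT j) (wT j)) →
    (SatInf mem (Internal mem stP) A D RA φ Fin.elim0 vT ↔
     SatInf mem (Internal mem stP) B E RB φ Fin.elim0 wT))

/-- `p ∈ P_{LAB}`. -/
def PCond (mem : M → M → Prop) (stP : M → Prop) {ι : Type v}
    (A B : M) (RA RB : ι → M) (p : M) : Prop :=
  ∃ D E, PCondOn mem stP A B RA RB D E p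

/-! ### The product forcing Π -/

section Pi
variable (mem : M → M → Prop) (stP : M → Prop)

/-- `i = ⟨w, κ, L, A, B⟩`. -/
def Is5Tup (i w κ L A B : M) : Prop :=
  ∃ r1 r2 r3, OPairIn mem TrueC i w r1 ∧ OPairIn mem TrueC r1 κ r2 ∧
    OPairIn mem TrueC r2 L r3 ∧ OPairIn mem TrueC r3 A B

/-- `κ` is a cardinal of the internal universe. -/
def ICardinal (κ : M) : Prop :=
  Internal mem stP κ ∧ CardinalIn mem (Internal mem stP) κ

/-- `x` is internal and finite in the sense of the internal universe. -/
def IFinite (x : M) : Prop := Internal mem stP x ∧ FiniteIn mem (Internal mem stP) x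

/-- `i` is an index: an internal 5-tuple `⟨w, κ, L, A, B⟩` where `κ` is an
I-cardinal, `L` an internal language `{s_α : α < κ}`, and `A`, `B` internal
`L`-structures (coded as pairs of a base set and an interpretation map). -/
def IsIndex (i : M) : Prop :=
  Internal mem stP i ∧ ∃ w κ L A B, Is5Tup mem i w κ L A B ∧
    Internal mem stP w ∧ ICardinal mem stP κ ∧
    Internal mem stP L ∧ FuncOnIn mem TrueC L (fun α => mem α κ) ∧
    (∃ bA iA, OPairIn mem TrueC A bA iA ∧ Internal mem stP bA ∧ Internal mem stP iA ∧
      FuncOnIn mem TrueC iA (fun α => mem α κ)) ∧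
    (∃ bB iB, OPairIn mem TrueC B bB iB ∧ Internal mem stP bB ∧ Internal mem stP iB ∧
      FuncOnIn mem TrueC iB (fun α => mem α κ))

/-- `q ∈ P_{L_i A_i B_i}` for the index with components `κ, A, B`: the
language of the restricted structures has as symbols the standard `α < κ`. -/
def PCondIdx (κ A B q : M) : Prop :=
  ∀ bA iA bB iB, OPairIn mem TrueC A bA iA → OPairIn mem TrueC B bB iB →
    ∀ RA RB : {α : M // stP α ∧ mem α κ} → M,
      (∀ α, FValIn mem TrueC iA α.1 (RA α)) → (∀ α, FValIn mem TrueC iB α.1 (RB α)) →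
      PCond mem stP bA bB RA RB q

/-- `π ∈ Π`: an internal function with internal I-finite domain consisting of
indices, whose value at each index is a condition of the corresponding
forcing `P_{L_i A_i B_i}`. -/
def IsPiCond (π : M) : Prop :=
  Internal mem stP π ∧ ∃ d, Internal mem stP d ∧ IFinite mem stP d ∧
    (∀ i, mem i d → IsIndex mem stP i) ∧ FuncOnIn mem TrueC π (fun i => mem i d) ∧
    (∀ i q w κ L A B, mem i d → FValIn mem TrueC π i q → Is5Tup mem i w κ L A B →
      PCondIdx mem stP κ A B q)

/-- The order of `Π`: `π ≤ ρ` iff the domain of `π` extends that of `ρ` and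
componentwise `π_i ≤ ρ_i` (i.e. `ρ_i ⊆ π_i`). -/
def PiLe (π ρ : M) : Prop :=
  ∀ i q, FValIn mem TrueC ρ i q → ∃ q', FValIn mem TrueC π i q' ∧ SubIn mem TrueC q q'

/-- `Dc` is an open dense subclass of `Π`. -/
def PiOpenDense (Dc : M → Prop) : Prop :=
  (∀ π, Dc π → IsPiCond mem stP π) ∧
  (∀ π, IsPiCond mem stP π → ∃ ρ, Dc ρ ∧ IsPiCond mem stP ρ ∧ PiLe mem ρ π) ∧
  (∀ π ρ, IsPiCond mem stP π → Dc ρ → PiLe mem π ρ → Dc π)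

end Pi

/-! ### Miscellanea for particular statements -/

/-- `X` is infinite in the sense of the internal universe. -/
def InfiniteI (mem : M → M → Prop) (stP : M → Prop) (X : M) : Prop :=
  Internal mem stP X ∧ ¬ FiniteIn mem (Internal mem stP) X

/-- `card X < card Y` in the internal universe. -/
def CardLtI (mem : M → M → Prop) (stP : M → Prop) (X Y : M) : Prop :=
  ∃ κ μ, ICardinal mem stP κ ∧ ICardinal mem stP μ ∧ mem κ μ ∧
    EquinumIn mem (Internal mem stP) X κ ∧ EquinumIn mem (Internal mem stP) Y μ

end HSTF

namespace HSTF

/-! ### Auxiliary development for the condensation theorem -/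

section CondAux

variable {M : Type u}

/-- A predicate on valuations is definable by an ∈-st-formula. -/
def IsDef (mem : M → M → Prop) (stP : M → Prop) (n : ℕ) (P : (Fin n → M) → Prop) : Prop :=
  ∃ φ : StFormula n, ∀ v : Fin n → M, EvalIn mem stP TrueC φ v ↔ P v

variable {mem : M → M → Prop} {stP : M → Prop} {n : ℕ}

lemma isDef_mem (i j : Fin n) : IsDef mem stP n fun v => mem (v i) (v j) :=
  ⟨.mem i j, fun _ => Iff.rfl⟩

lemma isDef_eq (i j : Fin n) : IsDef mem stP n fun v => v i = v j :=
  ⟨.eq i j, fun _ => Iff.rfl⟩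

lemma isDef_st (i : Fin n) : IsDef mem stP n fun v => stP (v i) :=
  ⟨.st i, fun _ => Iff.rfl⟩

lemma IsDef.not {P : (Fin n → M) → Prop} (h : IsDef mem stP n P) :
    IsDef mem stP n fun v => ¬ P v := by
  obtain ⟨φ, hφ⟩ := h
  exact ⟨.not φ, fun v => by simp [EvalIn, hφ]⟩

lemma IsDef.and {P Q : (Fin n → M) → Prop} (h : IsDef mem stP n P) (h' : IsDef mem stP n Q) :
    IsDef mem stP n fun v => P v ∧ Q v := by
  obtain ⟨φ, hφ⟩ := h; obtain ⟨ψ, hψ⟩ := h'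
  exact ⟨.and φ ψ, fun v => by simp [EvalIn, hφ, hψ]⟩

lemma IsDef.or {P Q : (Fin n → M) → Prop} (h : IsDef mem stP n P) (h' : IsDef mem stP n Q) :
    IsDef mem stP n fun v => P v ∨ Q v := by
  obtain ⟨φ, hφ⟩ := h; obtain ⟨ψ, hψ⟩ := h'
  refine ⟨.not (.and (.not φ) (.not ψ)), fun v => ?_⟩
  simp [EvalIn, hφ, hψ]; tauto

lemma IsDef.imp {P Q : (Fin n → M) → Prop} (h : IsDef mem stP n P) (h' : IsDef mem stP n Q) :
    IsDef mem stP n fun v => P v → Q v := by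
  obtain ⟨φ, hφ⟩ := h; obtain ⟨ψ, hψ⟩ := h'
  refine ⟨.not (.and φ (.not ψ)), fun v => ?_⟩
  simp only [EvalIn, hφ, hψ]; tauto

lemma IsDef.congr' {P Q : (Fin n → M) → Prop} (h : IsDef mem stP n P)
    (e : ∀ v, Q v ↔ P v) : IsDef mem stP n Q := by
  obtain ⟨φ, hφ⟩ := h
  exact ⟨φ, fun v => (hφ v).trans (e v).symm⟩

lemma IsDef.iff {P Q : (Fin n → M) → Prop} (h : IsDef mem stP n P) (h' : IsDef mem stP n Q) :
    IsDef mem stP n fun v => P v ↔ Q v := by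
  have := (h.imp h').and (h'.imp h)
  refine this.congr' fun v => ?_
  tauto

lemma IsDef.all {P : (Fin (n + 1) → M) → Prop} (h : IsDef mem stP (n + 1) P) :
    IsDef mem stP n fun v => ∀ x, P (Fin.snoc v x) := by
  obtain ⟨φ, hφ⟩ := h
  exact ⟨.all φ, fun v => by simp [EvalIn, TrueC, hφ]⟩

lemma IsDef.ex {P : (Fin (n + 1) → M) → Prop} (h : IsDef mem stP (n + 1) P) :
    IsDef mem stP n fun v => ∃ x, P (Fin.snoc v x) := by
  obtain ⟨φ, hφ⟩ := h
  refine ⟨.not (.all (.not φ)), fun v => ?_⟩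
  simp [EvalIn, TrueC, hφ]

/-! #### Mid-level definability lemmas -/

lemma isDef_sing (s x : Fin n) : IsDef mem stP n fun v => SingIn mem TrueC (v s) (v x) := by
  refine (IsDef.all ((isDef_mem (Fin.last n) s.castSucc).iff
    (isDef_eq (Fin.last n) x.castSucc))).congr' fun v => ?_
  simp [SingIn, TrueC, Fin.snoc_last, Fin.snoc_castSucc]

lemma isDef_upair (p x y : Fin n) : IsDef mem stP n fun v => UPairIn mem TrueC (v p) (v x) (v y) := by
  refine (IsDef.all ((isDef_mem (Fin.last n) p.castSucc).iff
    ((isDef_eq (Fin.last n) x.castSucc).or (isDef_eq (Fin.last n) y.castSucc)))).congr' fun v => ?_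
  simp [UPairIn, TrueC, Fin.snoc_last, Fin.snoc_castSucc]

lemma isDef_opair (p x y : Fin n) : IsDef mem stP n fun v => OPairIn mem TrueC (v p) (v x) (v y) := by
  refine (IsDef.ex (IsDef.ex
    (((isDef_sing ((Fin.last n).castSucc) (x.castSucc.castSucc)).and
      ((isDef_upair (Fin.last (n+1)) (x.castSucc.castSucc) (y.castSucc.castSucc)).and
       (isDef_upair (p.castSucc.castSucc) ((Fin.last n).castSucc) (Fin.last (n+1)))))))).congr'
    fun v => ?_
  simp [OPairIn, TrueC, Fin.snoc_last, Fin.snoc_castSucc]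

lemma isDef_fval (f x y : Fin n) : IsDef mem stP n fun v => FValIn mem TrueC (v f) (v x) (v y) := by
  refine (IsDef.ex ((isDef_mem (Fin.last n) f.castSucc).and
    (isDef_opair (Fin.last n) x.castSucc y.castSucc))).congr' fun v => ?_
  simp [FValIn, TrueC, Fin.snoc_last, Fin.snoc_castSucc]

lemma isDef_emptyIn (x : Fin n) : IsDef mem stP n fun v => EmptyIn mem TrueC (v x) := by
  refine (IsDef.all ((isDef_mem (Fin.last n) x.castSucc).not)).congr' fun v => ?_
  simp [EmptyIn, TrueC, Fin.snoc_last, Fin.snoc_castSucc]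

lemma isDef_succIn (s x : Fin n) : IsDef mem stP n fun v => SuccIn mem TrueC (v s) (v x) := by
  refine (IsDef.all ((isDef_mem (Fin.last n) s.castSucc).iff
    ((isDef_mem (Fin.last n) x.castSucc).or (isDef_eq (Fin.last n) x.castSucc)))).congr' fun v => ?_
  simp [SuccIn, TrueC, Fin.snoc_last, Fin.snoc_castSucc]

lemma isDef_funcOnMem (f s : Fin n) :
    IsDef mem stP n fun v => FuncOnIn mem TrueC (v f) (fun i => mem i (v s)) := by
  have c1 : IsDef mem stP n fun v => ∀ p, mem p (v f) →
      ∃ x y, mem x (v s) ∧ OPairIn mem TrueC p x y := by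
    refine (IsDef.all ((isDef_mem (Fin.last n) f.castSucc).imp
      (IsDef.ex (IsDef.ex
        ((isDef_mem ((Fin.last (n+1)).castSucc) (s.castSucc.castSucc.castSucc)).and
         (isDef_opair ((Fin.last n).castSucc.castSucc) ((Fin.last (n+1)).castSucc)
           (Fin.last (n+2)))))))).congr' fun v => ?_
    simp [Fin.snoc_last, Fin.snoc_castSucc]
  have c2 : IsDef mem stP n fun v => ∀ x, mem x (v s) →
      ∃ y, FValIn mem TrueC (v f) x y := by
    refine (IsDef.all ((isDef_mem (Fin.last n) s.castSucc).imp
      (IsDef.ex (isDef_fval (f.castSucc.castSucc) ((Fin.last n).castSucc)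
        (Fin.last (n+1)))))).congr' fun v => ?_
    simp [Fin.snoc_last, Fin.snoc_castSucc]
  have c3 : IsDef mem stP n fun v => ∀ x y y', FValIn mem TrueC (v f) x y →
      FValIn mem TrueC (v f) x y' → y = y' := by
    refine (IsDef.all (IsDef.all (IsDef.all
      ((isDef_fval (f.castSucc.castSucc.castSucc) ((Fin.last n).castSucc.castSucc)
          ((Fin.last (n+1)).castSucc)).imp
       ((isDef_fval (f.castSucc.castSucc.castSucc) ((Fin.last n).castSucc.castSucc)
          (Fin.last (n+2))).imp
        (isDef_eq ((Fin.last (n+1)).castSucc) (Fin.last (n+2)))))))).congr' fun v => ?_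
    simp [Fin.snoc_last, Fin.snoc_castSucc]
  refine ((c1.and (c2.and c3))).congr' fun v => ?_
  simp [FuncOnIn, TrueC]

/-- Condensation attempt: a function (set of pairs with standard first
components) whose domain is closed under standard elements, satisfying the
condensation recursion. -/
def Att (mem : M → M → Prop) (stP : M → Prop) (f : M) : Prop :=
  (∀ q, mem q f → ∃ x y, stP x ∧ OPairIn mem TrueC q x y) ∧
  (∀ x y y', FValIn mem TrueC f x y → FValIn mem TrueC f x y' → y = y') ∧
  (∀ x y u, FValIn mem TrueC f x y → stP u → mem u x → ∃ v, FValIn mem TrueC f u v) ∧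
  (∀ x y w, FValIn mem TrueC f x y →
    (mem w y ↔ ∃ u v, stP u ∧ mem u x ∧ FValIn mem TrueC f u v ∧ w = v))

/-- The condensation relation: `z = x̂`, via attempts. -/
def Cnd (mem : M → M → Prop) (stP : M → Prop) (x z : M) : Prop :=
  ∃ f, Att mem stP f ∧ FValIn mem TrueC f x z

lemma isDef_att (f : Fin n) : IsDef mem stP n fun v => Att mem stP (v f) := by
  have a1 : IsDef mem stP n fun v => ∀ q, mem q (v f) →
      ∃ x y, stP x ∧ OPairIn mem TrueC q x y := by
    refine (IsDef.all ((isDef_mem (Fin.last n) f.castSucc).imp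
      (IsDef.ex (IsDef.ex
        ((isDef_st ((Fin.last (n+1)).castSucc)).and
         (isDef_opair ((Fin.last n).castSucc.castSucc) ((Fin.last (n+1)).castSucc)
           (Fin.last (n+2)))))))).congr' fun v => ?_
    simp [Fin.snoc_last, Fin.snoc_castSucc]
  have a2 : IsDef mem stP n fun v => ∀ x y y', FValIn mem TrueC (v f) x y →
      FValIn mem TrueC (v f) x y' → y = y' := by
    refine (IsDef.all (IsDef.all (IsDef.all
      ((isDef_fval (f.castSucc.castSucc.castSucc) ((Fin.last n).castSucc.castSucc)
          ((Fin.last (n+1)).castSucc)).imp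
       ((isDef_fval (f.castSucc.castSucc.castSucc) ((Fin.last n).castSucc.castSucc)
          (Fin.last (n+2))).imp
        (isDef_eq ((Fin.last (n+1)).castSucc) (Fin.last (n+2)))))))).congr' fun v => ?_
    simp [Fin.snoc_last, Fin.snoc_castSucc]
  have a3 : IsDef mem stP n fun v => ∀ x y u, FValIn mem TrueC (v f) x y → stP u →
      mem u x → ∃ w, FValIn mem TrueC (v f) u w := by
    refine (IsDef.all (IsDef.all (IsDef.all
      ((isDef_fval (f.castSucc.castSucc.castSucc) ((Fin.last n).castSucc.castSucc)
          ((Fin.last (n+1)).castSucc)).imp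
       ((isDef_st (Fin.last (n+2))).imp
        ((isDef_mem (Fin.last (n+2)) ((Fin.last n).castSucc.castSucc)).imp
         (IsDef.ex (isDef_fval (f.castSucc.castSucc.castSucc.castSucc)
           ((Fin.last (n+2)).castSucc) (Fin.last (n+3)))))))))).congr' fun v => ?_
    simp [Fin.snoc_last, Fin.snoc_castSucc]
  have inner : IsDef mem stP (n+3) fun v => ∃ u u', stP u ∧ mem u (v ((Fin.last n).castSucc.castSucc)) ∧
      FValIn mem TrueC (v (f.castSucc.castSucc.castSucc)) u u' ∧ v (Fin.last (n+2)) = u' := by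
    refine (IsDef.ex (IsDef.ex
      ((isDef_st ((Fin.last (n+3)).castSucc)).and
       ((isDef_mem ((Fin.last (n+3)).castSucc)
          ((Fin.last n).castSucc.castSucc.castSucc.castSucc)).and
        ((isDef_fval (f.castSucc.castSucc.castSucc.castSucc.castSucc)
           ((Fin.last (n+3)).castSucc) (Fin.last (n+4))).and
         (isDef_eq ((Fin.last (n+2)).castSucc.castSucc) (Fin.last (n+4)))))))).congr' fun v => ?_
    simp [Fin.snoc_last, Fin.snoc_castSucc]
  have a4 : IsDef mem stP n fun v => ∀ x y w, FValIn mem TrueC (v f) x y →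
      (mem w y ↔ ∃ u u', stP u ∧ mem u x ∧ FValIn mem TrueC (v f) u u' ∧ w = u') := by
    refine (IsDef.all (IsDef.all (IsDef.all
      ((isDef_fval (f.castSucc.castSucc.castSucc) ((Fin.last n).castSucc.castSucc)
          ((Fin.last (n+1)).castSucc)).imp
       ((isDef_mem (Fin.last (n+2)) ((Fin.last (n+1)).castSucc)).iff inner))))).congr' fun v => ?_
    simp [Fin.snoc_last, Fin.snoc_castSucc]
  exact ((a1.and (a2.and (a3.and a4)))).congr' fun v => Iff.rfl

lemma isDef_cnd (x z : Fin n) : IsDef mem stP n fun v => Cnd mem stP (v x) (v z) := by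
  refine (IsDef.ex ((isDef_att (Fin.last n)).and
    (isDef_fval (Fin.last n) x.castSucc z.castSucc))).congr' fun v => ?_
  simp [Cnd, Fin.snoc_last, Fin.snoc_castSucc]

/-- `z` is the value at `k` of a chain of standard sets starting at `x`,
indexed by the natural numbers `≤ k`. -/
def ChainP (mem : M → M → Prop) (stP : M → Prop) (k x z : M) : Prop :=
  ∃ c s, (∀ w, mem w s ↔ (mem w k ∨ w = k)) ∧
    FuncOnIn mem TrueC c (fun i => mem i s) ∧
    (∀ j y, mem j s → EmptyIn mem TrueC j → FValIn mem TrueC c j y → y = x) ∧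
    (∀ j j' y y', mem j s → mem j' s → SuccIn mem TrueC j' j →
      FValIn mem TrueC c j y → FValIn mem TrueC c j' y' → stP y' ∧ mem y' y) ∧
    (∀ j y, mem j s → FValIn mem TrueC c j y → stP y) ∧
    FValIn mem TrueC c k z

lemma isDef_chain (k x z : Fin n) :
    IsDef mem stP n fun v => ChainP mem stP (v k) (v x) (v z) := by
  have cA : IsDef mem stP (n+2) fun v => ∀ w, mem w (v (Fin.last (n+1))) ↔
      (mem w (v (k.castSucc.castSucc)) ∨ w = v (k.castSucc.castSucc)) := by
    refine (IsDef.all ((isDef_mem (Fin.last (n+2)) ((Fin.last (n+1)).castSucc)).iff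
      ((isDef_mem (Fin.last (n+2)) (k.castSucc.castSucc.castSucc)).or
       (isDef_eq (Fin.last (n+2)) (k.castSucc.castSucc.castSucc))))).congr' fun v => ?_
    simp [Fin.snoc_last, Fin.snoc_castSucc]
  have cB : IsDef mem stP (n+2) fun v => FuncOnIn mem TrueC (v ((Fin.last n).castSucc))
      (fun i => mem i (v (Fin.last (n+1)))) :=
    isDef_funcOnMem _ _
  have cC : IsDef mem stP (n+2) fun v => ∀ j y, mem j (v (Fin.last (n+1))) →
      EmptyIn mem TrueC j → FValIn mem TrueC (v ((Fin.last n).castSucc)) j y →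
      y = v (x.castSucc.castSucc) := by
    refine (IsDef.all (IsDef.all
      ((isDef_mem ((Fin.last (n+2)).castSucc) ((Fin.last (n+1)).castSucc.castSucc)).imp
       ((isDef_emptyIn ((Fin.last (n+2)).castSucc)).imp
        ((isDef_fval ((Fin.last n).castSucc.castSucc.castSucc) ((Fin.last (n+2)).castSucc)
            (Fin.last (n+3))).imp
         (isDef_eq (Fin.last (n+3)) (x.castSucc.castSucc.castSucc.castSucc))))))).congr'
      fun v => ?_
    simp [Fin.snoc_last, Fin.snoc_castSucc]
  have cD : IsDef mem stP (n+2) fun v => ∀ j j' y y', mem j (v (Fin.last (n+1))) →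
      mem j' (v (Fin.last (n+1))) → SuccIn mem TrueC j' j →
      FValIn mem TrueC (v ((Fin.last n).castSucc)) j y →
      FValIn mem TrueC (v ((Fin.last n).castSucc)) j' y' → stP y' ∧ mem y' y := by
    have d5 : IsDef mem stP (n+6) fun v => stP (v (Fin.last (n+5))) ∧
        mem (v (Fin.last (n+5))) (v ((Fin.last (n+4)).castSucc)) :=
      (isDef_st _).and (isDef_mem _ _)
    have d4 := (isDef_fval (mem := mem) (stP := stP)
      ((Fin.last n).castSucc.castSucc.castSucc.castSucc.castSucc)
      ((Fin.last (n+3)).castSucc.castSucc) (Fin.last (n+5))).imp d5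
    have d3 := (isDef_fval (mem := mem) (stP := stP)
      ((Fin.last n).castSucc.castSucc.castSucc.castSucc.castSucc)
      ((Fin.last (n+2)).castSucc.castSucc.castSucc) ((Fin.last (n+4)).castSucc)).imp d4
    have d2 := (isDef_succIn (mem := mem) (stP := stP)
      ((Fin.last (n+3)).castSucc.castSucc) ((Fin.last (n+2)).castSucc.castSucc.castSucc)).imp d3
    have d1 := (isDef_mem (mem := mem) (stP := stP)
      ((Fin.last (n+3)).castSucc.castSucc)
      ((Fin.last (n+1)).castSucc.castSucc.castSucc.castSucc)).imp d2
    have d0 := (isDef_mem (mem := mem) (stP := stP)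
      ((Fin.last (n+2)).castSucc.castSucc.castSucc)
      ((Fin.last (n+1)).castSucc.castSucc.castSucc.castSucc)).imp d1
    refine (d0.all.all.all.all).congr' fun v => ?_
    simp [Fin.snoc_last, Fin.snoc_castSucc]
  have cE : IsDef mem stP (n+2) fun v => ∀ j y, mem j (v (Fin.last (n+1))) →
      FValIn mem TrueC (v ((Fin.last n).castSucc)) j y → stP y := by
    refine (IsDef.all (IsDef.all
      ((isDef_mem ((Fin.last (n+2)).castSucc) ((Fin.last (n+1)).castSucc.castSucc)).imp
       ((isDef_fval ((Fin.last n).castSucc.castSucc.castSucc) ((Fin.last (n+2)).castSucc)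
           (Fin.last (n+3))).imp
        (isDef_st (Fin.last (n+3))))))).congr' fun v => ?_
    simp [Fin.snoc_last, Fin.snoc_castSucc]
  have cF : IsDef mem stP (n+2) fun v => FValIn mem TrueC (v ((Fin.last n).castSucc))
      (v (k.castSucc.castSucc)) (v (z.castSucc.castSucc)) :=
    isDef_fval _ _ _
  refine (IsDef.ex (IsDef.ex
    (cA.and (cB.and (cC.and (cD.and (cE.and cF))))))).congr' fun v => ?_
  constructor
  · rintro ⟨c, s, h⟩
    refine ⟨c, s, ?_⟩
    simpa [Fin.snoc_last, Fin.snoc_castSucc] using h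
  · rintro ⟨c, s, h⟩
    refine ⟨c, s, ?_⟩
    simpa [Fin.snoc_last, Fin.snoc_castSucc] using h

/-! #### Basic set constructions in a model of HST -/

section WithModel

variable (hH : HSTModel mem stP)
include hH

noncomputable def uPair (x y : M) : M := (hH.pairing x y).choose

lemma uPair_spec (x y z : M) : mem z (uPair hH x y) ↔ (z = x ∨ z = y) :=
  (hH.pairing x y).choose_spec z trivial

noncomputable def sing (x : M) : M := uPair hH x x

lemma sing_spec (x z : M) : mem z (sing hH x) ↔ z = x := by
  simp [sing, uPair_spec]

noncomputable def oPair (x y : M) : M := uPair hH (sing hH x) (uPair hH x y)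

lemma oPair_is_opair (x y : M) : OPairIn mem TrueC (oPair hH x y) x y := by
  refine ⟨sing hH x, uPair hH x y, trivial, trivial, fun z _ => sing_spec hH x z,
    fun z _ => uPair_spec hH x y z, fun z _ => uPair_spec hH _ _ z⟩

lemma eq_of_mem_iff {x y : M} (h : ∀ z, mem z x ↔ mem z y) : x = y := hH.ext x y h

lemma opair_eq {p x y : M} (h : OPairIn mem TrueC p x y) : p = oPair hH x y := by
  obtain ⟨s, t, -, -, hs, ht, hp⟩ := h
  have hs' : s = sing hH x :=
    eq_of_mem_iff hH fun z => (hs z trivial).trans (sing_spec hH x z).symm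
  have ht' : t = uPair hH x y :=
    eq_of_mem_iff hH fun z => (ht z trivial).trans (uPair_spec hH x y z).symm
  refine eq_of_mem_iff hH fun z => ?_
  rw [(hp z trivial), hs', ht', oPair]
  exact (uPair_spec hH _ _ z).symm

lemma sing_inj {x y : M} (h : sing hH x = sing hH y) : x = y := by
  have := (sing_spec hH y x).mp (h ▸ (sing_spec hH x x).mpr rfl)
  exact this

lemma uPair_mem_cases {x y x' y' : M} (h : uPair hH x y = uPair hH x' y') :
    (x = x' ∨ x = y') ∧ (y = x' ∨ y = y') := by
  constructor
  · exact (uPair_spec hH x' y' x).mp (h ▸ (uPair_spec hH x y x).mpr (Or.inl rfl))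
  · exact (uPair_spec hH x' y' y).mp (h ▸ (uPair_spec hH x y y).mpr (Or.inr rfl))

lemma oPair_inj {x y x' y' : M} (h : oPair hH x y = oPair hH x' y') : x = x' ∧ y = y' := by
  have hmem : mem (sing hH x) (oPair hH x' y') := by
    rw [← h]; exact (uPair_spec hH _ _ _).mpr (Or.inl rfl)
  have hxx' : x = x' := by
    rcases (uPair_spec hH (sing hH x') (uPair hH x' y') (sing hH x)).mp hmem with h1 | h1
    · exact sing_inj hH h1
    · have hx' : mem x' (sing hH x) := by rw [h1]; exact (uPair_spec hH _ _ _).mpr (Or.inl rfl)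
      exact ((sing_spec hH x x').mp hx').symm
  subst hxx'
  have hmem2 : mem (uPair hH x y) (oPair hH x y') := by
    rw [← h]; exact (uPair_spec hH _ _ _).mpr (Or.inr rfl)
  rcases (uPair_spec hH (sing hH x) (uPair hH x y') (uPair hH x y)).mp hmem2 with h2 | h2
  · -- uPair x y = sing x, so y = x; then show y' = x as well
    have hy : y = x := (sing_spec hH x y).mp (by rw [← h2]; exact (uPair_spec hH _ _ _).mpr (Or.inr rfl))
    have hmem3 : mem (uPair hH x y') (oPair hH x y) := by
      rw [h]; exact (uPair_spec hH _ _ _).mpr (Or.inr rfl)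
    rcases (uPair_spec hH (sing hH x) (uPair hH x y) (uPair hH x y')).mp hmem3 with h3 | h3
    · have hy' : y' = x := (sing_spec hH x y').mp
        (by rw [← h3]; exact (uPair_spec hH _ _ _).mpr (Or.inr rfl))
      exact ⟨rfl, hy.trans hy'.symm⟩
    · rcases (uPair_mem_cases hH h3).2 with h4 | h4
      · exact ⟨rfl, hy.trans h4.symm⟩
      · exact ⟨rfl, h4.symm⟩
  · rcases (uPair_mem_cases hH h2).2 with h4 | h4
    · -- y = x; then y' ∈ {x, y} = {x}, so y' = x
      rcases (uPair_mem_cases hH h2.symm).2 with h5 | h5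
      · exact ⟨rfl, h4.trans h5.symm⟩
      · exact ⟨rfl, h5.symm⟩
    · exact ⟨rfl, h4⟩

lemma opairIn_inj {p x y x' y' : M} (h : OPairIn mem TrueC p x y)
    (h' : OPairIn mem TrueC p x' y') : x = x' ∧ y = y' :=
  oPair_inj hH ((opair_eq hH h).symm.trans (opair_eq hH h'))

lemma fval_iff {f x y : M} : FValIn mem TrueC f x y ↔ mem (oPair hH x y) f := by
  constructor
  · rintro ⟨p, -, hp, hop⟩
    rwa [← opair_eq hH hop]
  · intro hp
    exact ⟨oPair hH x y, trivial, hp, oPair_is_opair hH x y⟩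

noncomputable def sUn (x : M) : M := (hH.union x).choose

lemma sUn_spec (x z : M) : mem z (sUn hH x) ↔ ∃ y, mem y x ∧ mem z y :=
  (hH.union x).choose_spec z

noncomputable def bUn (a b : M) : M := sUn hH (uPair hH a b)

lemma bUn_spec (a b z : M) : mem z (bUn hH a b) ↔ (mem z a ∨ mem z b) := by
  rw [bUn, sUn_spec hH]
  constructor
  · rintro ⟨y, hy, hz⟩
    rcases (uPair_spec hH a b y).mp hy with rfl | rfl
    · exact Or.inl hz
    · exact Or.inr hz
  · rintro (hz | hz)
    · exact ⟨a, (uPair_spec hH a b a).mpr (Or.inl rfl), hz⟩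
    · exact ⟨b, (uPair_spec hH a b b).mpr (Or.inr rfl), hz⟩

noncomputable def emptyM : M := hH.infinity.choose_spec.1.choose

lemma emptyM_spec (z : M) : ¬ mem z (emptyM hH) :=
  hH.infinity.choose_spec.1.choose_spec.2 z trivial

lemma emptyM_empty : EmptyIn mem TrueC (emptyM hH) := fun z _ => emptyM_spec hH z

/-! #### Schema wrappers -/

lemma sepN {k : ℕ} (p : Fin k → M) (P : (Fin k → M) → M → Prop)
    (hdef : IsDef mem stP (k + 1) fun v => P (fun i => v i.castSucc) (v (Fin.last k)))
    (x : M) : ∃ s, ∀ z, mem z s ↔ (mem z x ∧ P p z) := by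
  obtain ⟨φ, hφ⟩ := hdef
  obtain ⟨s, hs⟩ := hH.separation φ p x
  refine ⟨s, fun z => ?_⟩
  rw [hs z, hφ]
  simp only [Fin.snoc_castSucc, Fin.snoc_last]

lemma collN {k : ℕ} (p : Fin k → M) (P : (Fin k → M) → M → M → Prop)
    (hdef : IsDef mem stP (k + 2) fun v =>
      P (fun i => v i.castSucc.castSucc) (v ((Fin.last k).castSucc)) (v (Fin.last (k + 1))))
    (x : M) : ∃ B, ∀ a, mem a x → (∃ b, P p a b) → ∃ b, mem b B ∧ P p a b := by
  obtain ⟨φ, hφ⟩ := hdef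
  obtain ⟨B, hB⟩ := hH.collection φ p x
  refine ⟨B, fun a ha hex => ?_⟩
  have key : ∀ b, EvalIn mem stP TrueC φ (Fin.snoc (Fin.snoc p a) b) ↔ P p a b := by
    intro b
    rw [hφ]
    simp only [Fin.snoc_castSucc, Fin.snoc_last]
  obtain ⟨b, hb1, hb2⟩ := hB a ha (by obtain ⟨b, hb⟩ := hex; exact ⟨b, (key b).mpr hb⟩)
  exact ⟨b, hb1, (key b).mp hb2⟩

lemma replN {k : ℕ} (p : Fin k → M) (P : (Fin k → M) → M → M → Prop)
    (hdef : IsDef mem stP (k + 2) fun v =>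
      P (fun i => v i.castSucc.castSucc) (v ((Fin.last k).castSucc)) (v (Fin.last (k + 1))))
    (hfun : ∀ a b b', P p a b → P p a b' → b = b')
    (x : M) : ∃ B, ∀ b, mem b B ↔ ∃ a, mem a x ∧ P p a b := by
  obtain ⟨φ, hφ⟩ := hdef
  have key : ∀ a b, EvalIn mem stP TrueC φ (Fin.snoc (Fin.snoc p a) b) ↔ P p a b := by
    intro a b
    rw [hφ]
    simp only [Fin.snoc_castSucc, Fin.snoc_last]
  obtain ⟨B, hB⟩ := hH.replacement φ p x
    (fun a b b' h1 h2 => hfun a b b' ((key a b).mp h1) ((key a b').mp h2))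
  refine ⟨B, fun b => (hB b).trans ?_⟩
  exact exists_congr fun a => and_congr_right fun _ => key a b

/-! #### Natural numbers of the model -/

noncomputable def succOf (n : M) : M := bUn hH n (sing hH n)

lemma succOf_spec (n z : M) : mem z (succOf hH n) ↔ (mem z n ∨ z = n) := by
  rw [succOf, bUn_spec hH, sing_spec hH]

lemma succOf_succIn (n : M) : SuccIn mem TrueC (succOf hH n) n :=
  fun z _ => succOf_spec hH n z

lemma succIn_eq {s n : M} (h : SuccIn mem TrueC s n) : s = succOf hH n :=
  eq_of_mem_iff hH fun z => (h z trivial).trans (succOf_spec hH n z).symm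

omit hH in
lemma nat_irrefl {n : M} (hn : NatIn mem TrueC n) : ¬ mem n n :=
  fun h => hn.1.2.2.2.1 n trivial h h

omit hH in
lemma nat_mem {n m : M} (hn : NatIn mem TrueC n) (hm : mem m n) : NatIn mem TrueC m := by
  obtain ⟨⟨htr, hlin, htr3, hirr, hwf⟩, hsucc⟩ := hn
  have hsubn : ∀ z, mem z m → mem z n := fun z hz => htr m trivial hm z trivial hz
  refine ⟨⟨?_, ?_, ?_, ?_, ?_⟩, ?_⟩
  · intro y _ hy z _ hz
    exact htr3 z y m trivial trivial trivial (htr y trivial (hsubn y hy) z trivial hz)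
      (hsubn y hy) hm hz hy
  · intro y z _ _ hy hz
    exact hlin y z trivial trivial (hsubn y hy) (hsubn z hz)
  · intro y z w _ _ _ hy hz hw
    exact htr3 y z w trivial trivial trivial (hsubn y hy) (hsubn z hz) (hsubn w hw)
  · intro y _ hy
    exact hirr y trivial (hsubn y hy)
  · intro Y _ hsub hne
    exact hwf Y trivial (fun z _ hz => hsubn z (hsub z trivial hz)) hne
  · intro y _ hy
    rcases hy with rfl | hy
    · exact hsucc y trivial (Or.inr hm)
    · exact hsucc y trivial (Or.inr (hsubn y hy))

omit hH in
lemma nat_of_empty {e : M} (he : EmptyIn mem TrueC e) : NatIn mem TrueC e := by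
  refine ⟨⟨?_, ?_, ?_, ?_, ?_⟩, ?_⟩
  · exact fun y _ hy => absurd hy (he y trivial)
  · exact fun y z _ _ hy => absurd hy (he y trivial)
  · exact fun y z w _ _ _ hy => absurd hy (he y trivial)
  · exact fun y _ hy => absurd hy (he y trivial)
  · rintro Y _ hsub ⟨w, -, hw⟩
    exact absurd (hsub w trivial hw) (he w trivial)
  · intro y _ hy
    rcases hy with rfl | hy
    · exact Or.inl he
    · exact absurd hy (he y trivial)

lemma nat_succ {n : M} (hn : NatIn mem TrueC n) : NatIn mem TrueC (succOf hH n) := by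
  obtain ⟨⟨htr, hlin, htr3, hirr, hwf⟩, hsucc⟩ := hn
  have hnn : NatIn mem TrueC n := ⟨⟨htr, hlin, htr3, hirr, hwf⟩, hsucc⟩
  have hspec : ∀ z, mem z (succOf hH n) ↔ (mem z n ∨ z = n) := succOf_spec hH n
  refine ⟨⟨?_, ?_, ?_, ?_, ?_⟩, ?_⟩
  · intro y _ hy z _ hz
    rcases (hspec y).mp hy with hy' | rfl
    · exact (hspec z).mpr (Or.inl (htr y trivial hy' z trivial hz))
    · exact (hspec z).mpr (Or.inl hz)
  · intro y z _ _ hy hz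
    rcases (hspec y).mp hy with hy' | rfl <;> rcases (hspec z).mp hz with hz' | rfl
    · exact hlin y z trivial trivial hy' hz'
    · exact Or.inl hy'
    · exact Or.inr (Or.inr hz')
    · exact Or.inr (Or.inl rfl)
  · intro y z w _ _ _ hy hz hw hyz hzw
    rcases (hspec w).mp hw with hw' | rfl
    · have hzn : mem z n := htr w trivial hw' z trivial hzw
      have hyn : mem y n := htr z trivial hzn y trivial hyz
      exact htr3 y z w trivial trivial trivial hyn hzn hw' hyz hzw
    · exact htr z trivial hzw y trivial hyz
  · intro y _ hy
    rcases (hspec y).mp hy with hy' | rfl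
    · exact hirr y trivial hy'
    · exact nat_irrefl hnn
  · intro Y _ hsub hne
    obtain ⟨Yn, hYn⟩ := sepN hH ![n] (fun p z => mem z (p 0))
      (isDef_mem (Fin.last 1) ((0 : Fin 1).castSucc)) Y
    by_cases hc : ∃ w, mem w Yn
    · obtain ⟨w0, hw0⟩ := hc
      obtain ⟨w, -, hwY, hmin⟩ := hwf Yn trivial (fun z _ hz => ((hYn z).mp hz).2)
        ⟨w0, trivial, hw0⟩
      obtain ⟨hwY', hwn⟩ := (hYn w).mp hwY
      refine ⟨w, trivial, hwY', fun u _ hu hcontra => ?_⟩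
      have hun : mem u n := htr w trivial hwn u trivial hu
      exact hmin u trivial hu ((hYn u).mpr ⟨hcontra, hun⟩)
    · obtain ⟨w0, -, hw0⟩ := hne
      have hw0' : w0 = n := by
        rcases (hspec w0).mp (hsub w0 trivial hw0) with hw' | rfl
        · exact absurd ⟨w0, (hYn w0).mpr ⟨hw0, hw'⟩⟩ hc
        · rfl
      subst hw0'
      refine ⟨w0, trivial, hw0, fun u _ hu hcontra => ?_⟩
      exact hc ⟨u, (hYn u).mpr ⟨hcontra, hu⟩⟩
  · intro y _ hy
    rcases hy with rfl | hy
    · exact Or.inr ⟨n, trivial, succOf_succIn hH n⟩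
    · rcases (hspec y).mp hy with hy' | rfl
      · exact hsucc y trivial (Or.inr hy')
      · exact hsucc y trivial (Or.inl rfl)

lemma nat_succ_inj {n k : M} (hn : NatIn mem TrueC n) (hk : NatIn mem TrueC k)
    (h : succOf hH n = succOf hH k) : n = k := by
  by_contra hne
  have h1 : mem n k := by
    have : mem n (succOf hH k) := h ▸ (succOf_spec hH n n).mpr (Or.inr rfl)
    rcases (succOf_spec hH k n).mp this with h' | h'
    · exact h'
    · exact absurd h' hne
  have h2 : mem k n := by
    have : mem k (succOf hH n) := h.symm ▸ (succOf_spec hH k k).mpr (Or.inr rfl)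
    rcases (succOf_spec hH n k).mp this with h' | h'
    · exact h'
    · exact absurd h'.symm hne
  exact nat_irrefl hk (hk.1.1 n trivial h1 k trivial h2)

lemma nat_ind (Q : M → Prop)
    (hsep : ∀ s : M, ∃ Y, ∀ z, mem z Y ↔ (mem z s ∧ ¬ Q z))
    (h0 : ∀ e, EmptyIn mem TrueC e → Q e)
    (hs : ∀ k k', NatIn mem TrueC k → SuccIn mem TrueC k' k → Q k → Q k') :
    ∀ n, NatIn mem TrueC n → Q n := by
  intro n hn
  by_contra hq
  have hsn := nat_succ hH hn
  obtain ⟨Y, hY⟩ := hsep (succOf hH n)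
  have hnY : mem n Y := (hY n).mpr ⟨(succOf_spec hH n n).mpr (Or.inr rfl), hq⟩
  obtain ⟨m, -, hmY, hmin⟩ := hsn.1.2.2.2.2 Y trivial (fun z _ hz => ((hY z).mp hz).1)
    ⟨n, trivial, hnY⟩
  obtain ⟨hms, hmq⟩ := (hY m).mp hmY
  have hmnat : NatIn mem TrueC m := nat_mem hsn hms
  rcases hmnat.2 m trivial (Or.inl rfl) with hemp | ⟨z, -, hsz⟩
  · exact hmq (h0 m hemp)
  · have hzm : mem z m := (hsz z trivial).mpr (Or.inr rfl)
    have hzs : mem z (succOf hH n) := hsn.1.1 m trivial hms z trivial hzm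
    have hQz : Q z := by
      by_contra hqz
      exact hmin z trivial hzm ((hY z).mpr ⟨hzs, hqz⟩)
    exact hmq (hs z m (nat_mem hmnat hzm) hsz hQz)

lemma exists_omega : ∃ w : M, ∀ z, mem z w ↔ NatIn mem TrueC z := by
  set a := emptyM hH with ha
  have hyp : ∀ x, mem x (sing hH a) → ∃ y, mem y (sing hH a) ∧
      ∃ q, mem q (sing hH (oPair hH a a)) ∧ OPairIn mem TrueC q x y := by
    intro x hx
    have hxa : x = a := (sing_spec hH a x).mp hx
    refine ⟨x, hx, oPair hH x x, ?_, oPair_is_opair hH x x⟩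
    rw [hxa]
    exact (sing_spec hH (oPair hH a a) (oPair hH a a)).mpr rfl
  obtain ⟨w, f, hw, -⟩ := hH.dep_choice (sing hH a) (sing hH (oPair hH a a)) a
    ((sing_spec hH a a).mpr rfl) hyp
  exact ⟨w, hw⟩

/-! #### Chains and the standard transitive closure -/

lemma fval_dom {c s x y : M} (hf : FuncOnIn mem TrueC c (fun i => mem i s))
    (h : FValIn mem TrueC c x y) : mem x s := by
  obtain ⟨p, -, hp, hop⟩ := h
  obtain ⟨a, b, -, -, has, hab⟩ := hf.1 p trivial hp
  obtain ⟨hxa, -⟩ := opairIn_inj hH hop hab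
  rwa [hxa]

lemma fval_of_sing {e v x y : M} (h : FValIn mem TrueC (sing hH (oPair hH e v)) x y) :
    x = e ∧ y = v := by
  rw [fval_iff hH, sing_spec hH] at h
  exact oPair_inj hH h

omit hH in
lemma chain_st {m x z : M} (h : ChainP mem stP m x z) : stP z := by
  obtain ⟨c, s, hs, hf, hA, hB, hE, hV⟩ := h
  exact hE m z ((hs m).mpr (Or.inr rfl)) hV

lemma chain_zero {e x : M} (hx : stP x) (he : EmptyIn mem TrueC e) (z : M) :
    ChainP mem stP e x z ↔ z = x := by
  constructor
  · rintro ⟨c, s, hs, hf, hA, hB, hE, hV⟩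
    exact hA e z ((hs e).mpr (Or.inr rfl)) he hV
  · intro hz
    rw [hz]
    refine ⟨sing hH (oPair hH e x), succOf hH e, succOf_spec hH e, ?_, ?_, ?_, ?_, ?_⟩
    · refine ⟨?_, ?_, ?_⟩
      · intro p _ hp
        have := (sing_spec hH (oPair hH e x) p).mp hp
        subst this
        exact ⟨e, x, trivial, trivial, (succOf_spec hH e e).mpr (Or.inr rfl),
          oPair_is_opair hH e x⟩
      · intro j _ hj
        rcases (succOf_spec hH e j).mp hj with hj' | rfl
        · exact absurd hj' (he j trivial)
        · exact ⟨x, trivial, (fval_iff hH).mpr ((sing_spec hH _ _).mpr rfl)⟩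
      · intro a b b' _ _ _ h1 h2
        obtain ⟨-, rfl⟩ := fval_of_sing hH h1
        obtain ⟨-, rfl⟩ := fval_of_sing hH h2
        rfl
    · intro j y _ _ h1
      exact (fval_of_sing hH h1).2
    · intro j j' y y' hj hj' hsucc h1 h2
      obtain ⟨rfl, -⟩ := fval_of_sing hH h2
      have : mem j j' := (hsucc j trivial).mpr (Or.inr rfl)
      exact absurd this (he j trivial)
    · intro j y _ h1
      rw [(fval_of_sing hH h1).2]
      exact hx
    · exact (fval_iff hH).mpr ((sing_spec hH _ _).mpr rfl)

lemma succOf_not_mem {n : M} (hn : NatIn mem TrueC n) :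
    ¬ (mem (succOf hH n) n ∨ succOf hH n = n) := by
  rintro (h | h)
  · have hmem : mem n (succOf hH n) := (succOf_spec hH n n).mpr (Or.inr rfl)
    exact nat_irrefl hn (hn.1.1 (succOf hH n) trivial h n trivial hmem)
  · have hmem : mem n (succOf hH n) := (succOf_spec hH n n).mpr (Or.inr rfl)
    rw [h] at hmem
    exact nat_irrefl hn hmem

lemma chain_succ {n x : M} (hn : NatIn mem TrueC n) (z : M) :
    ChainP mem stP (succOf hH n) x z ↔
      ∃ y, ChainP mem stP n x y ∧ stP z ∧ mem z y := by
  have hsuccnat := nat_succ hH hn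
  constructor
  · rintro ⟨c, s, hs, hf, hA, hB, hE, hV⟩
    have hns : mem n s := (hs n).mpr (Or.inl ((succOf_spec hH n n).mpr (Or.inr rfl)))
    obtain ⟨y0, -, hy0⟩ := hf.2.1 n trivial hns
    have hn's : mem (succOf hH n) s := (hs (succOf hH n)).mpr (Or.inr rfl)
    have hstep := hB n (succOf hH n) y0 z hns hn's (succOf_succIn hH n) hy0 hV
    -- restrict c to the domain succOf n
    obtain ⟨c', hc'⟩ := sepN hH ![succOf hH n]
      (fun p q => ∃ j y, OPairIn mem TrueC q j y ∧ mem j (p 0))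
      ((IsDef.ex (IsDef.ex
        ((isDef_opair ((Fin.last 1).castSucc.castSucc) ((Fin.last 2).castSucc)
            (Fin.last 3)).and
         (isDef_mem ((Fin.last 2).castSucc)
            ((0 : Fin 1).castSucc.castSucc.castSucc))))).congr' fun v => by
        simp only [Fin.snoc_last, Fin.snoc_castSucc]) c
    have hsub : ∀ w, mem w (succOf hH n) → mem w s := fun w hw => (hs w).mpr (Or.inl hw)
    have hfval' : ∀ a b, FValIn mem TrueC c' a b ↔
        (FValIn mem TrueC c a b ∧ mem a (succOf hH n)) := by
      intro a b
      rw [fval_iff hH, fval_iff hH, hc']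
      constructor
      · rintro ⟨h1, j, y, hop, hj⟩
        obtain ⟨rfl, rfl⟩ := oPair_inj hH ((opair_eq hH hop).symm)
        exact ⟨h1, hj⟩
      · rintro ⟨h1, ha⟩
        exact ⟨h1, a, b, oPair_is_opair hH a b, ha⟩
    refine ⟨y0, ⟨c', succOf hH n, succOf_spec hH n, ⟨?_, ?_, ?_⟩, ?_, ?_, ?_, ?_⟩,
      hstep.1, hstep.2⟩
    · intro p _ hp
      obtain ⟨hpc, j, y, hop, hj⟩ := (hc' p).mp hp
      exact ⟨j, y, trivial, trivial, hj, hop⟩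
    · intro j _ hj
      obtain ⟨y, -, hy⟩ := hf.2.1 j trivial (hsub j hj)
      exact ⟨y, trivial, (hfval' j y).mpr ⟨hy, hj⟩⟩
    · intro a b b' _ _ _ h1 h2
      exact hf.2.2 a b b' trivial trivial trivial ((hfval' a b).mp h1).1
        ((hfval' a b').mp h2).1
    · intro j y hj hje h1
      exact hA j y (hsub j hj) hje ((hfval' j y).mp h1).1
    · intro j j' y y' hj hj' hsucc h1 h2
      exact hB j j' y y' (hsub j hj) (hsub j' hj') hsucc ((hfval' j y).mp h1).1
        ((hfval' j' y').mp h2).1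
    · intro j y hj h1
      exact hE j y (hsub j hj) ((hfval' j y).mp h1).1
    · exact (hfval' n y0).mpr ⟨hy0, (succOf_spec hH n n).mpr (Or.inr rfl)⟩
  · rintro ⟨y, ⟨c, s, hs, hf, hA, hB, hE, hV⟩, hstz, hzy⟩
    set n' := succOf hH n with hn'
    have hn's : ¬ mem n' s := by
      intro hmem
      exact succOf_not_mem hH hn ((hs n').mp hmem)
    have hssub : ∀ w, mem w s → mem w (succOf hH n') := by
      intro w hw
      rcases (hs w).mp hw with hw' | hw'
      · exact (succOf_spec hH n' w).mpr (Or.inl ((succOf_spec hH n w).mpr (Or.inl hw')))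
      · exact (succOf_spec hH n' w).mpr (Or.inl ((succOf_spec hH n w).mpr (Or.inr hw')))
    set c' := bUn hH c (sing hH (oPair hH n' z)) with hc'
    have hfval' : ∀ a b, FValIn mem TrueC c' a b ↔
        (FValIn mem TrueC c a b ∨ (a = n' ∧ b = z)) := by
      intro a b
      rw [fval_iff hH, hc', bUn_spec hH, sing_spec hH, ← fval_iff hH]
      constructor
      · rintro (h1 | h1)
        · exact Or.inl h1
        · exact Or.inr (oPair_inj hH h1)
      · rintro (h1 | ⟨rfl, rfl⟩)
        · exact Or.inl h1
        · exact Or.inr rfl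
    have hfvalx : ∀ {a b}, FValIn mem TrueC c a b → a ≠ n' := by
      intro a b hab heq
      rw [heq] at hab
      exact hn's (fval_dom hH hf hab)
    refine ⟨c', succOf hH n', succOf_spec hH n', ⟨?_, ?_, ?_⟩, ?_, ?_, ?_, ?_⟩
    · intro p _ hp
      rcases (bUn_spec hH _ _ p).mp hp with hp' | hp'
      · obtain ⟨a, b, -, -, has, hab⟩ := hf.1 p trivial hp'
        exact ⟨a, b, trivial, trivial, hssub a has, hab⟩
      · have := (sing_spec hH _ _).mp hp'
        subst this
        exact ⟨n', z, trivial, trivial, (succOf_spec hH n' n').mpr (Or.inr rfl),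
          oPair_is_opair hH n' z⟩
    · intro j _ hj
      rcases (succOf_spec hH n' j).mp hj with hj' | rfl
      · rcases (succOf_spec hH n j).mp hj' with hj'' | rfl
        · obtain ⟨b, -, hb⟩ := hf.2.1 j trivial ((hs j).mpr (Or.inl hj''))
          exact ⟨b, trivial, (hfval' j b).mpr (Or.inl hb)⟩
        · obtain ⟨b, -, hb⟩ := hf.2.1 j trivial ((hs j).mpr (Or.inr rfl))
          exact ⟨b, trivial, (hfval' j b).mpr (Or.inl hb)⟩
      · exact ⟨z, trivial, (hfval' n' z).mpr (Or.inr ⟨rfl, rfl⟩)⟩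
    · intro a b b' _ _ _ h1 h2
      rcases (hfval' a b).mp h1 with h1' | ⟨ha, hb⟩
      · rcases (hfval' a b').mp h2 with h2' | ⟨ha2, hb2⟩
        · exact hf.2.2 a b b' trivial trivial trivial h1' h2'
        · exact absurd ha2 (hfvalx h1')
      · rcases (hfval' a b').mp h2 with h2' | ⟨ha2, hb2⟩
        · exact absurd ha (hfvalx h2')
        · rw [hb, hb2]
    · intro j y₀ hj hje h1
      rcases (hfval' j y₀).mp h1 with h1' | ⟨rfl, rfl⟩
      · exact hA j y₀ (fval_dom hH hf h1') hje h1'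
      · have : mem n n' := (succOf_spec hH n n).mpr (Or.inr rfl)
        exact absurd this (hje n trivial)
    · intro j j' y₀ y₀' hj hj' hsucc h1 h2
      rcases (hfval' j' y₀').mp h2 with h2' | ⟨rfl, rfl⟩
      · -- old pair for j'; then j is old as well
        have hj's : mem j' s := fval_dom hH hf h2'
        rcases (hfval' j y₀).mp h1 with h1' | ⟨rfl, rfl⟩
        · exact hB j j' y₀ y₀' (fval_dom hH hf h1') hj's hsucc h1' h2'
        · -- j = n' : then n' ∈ j' ∈ s, contradiction
          have hn'j' : mem n' j' := (hsucc n' trivial).mpr (Or.inr rfl)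
          have hn'n : mem n' n := by
            rcases (hs j').mp hj's with hj'' | hj''
            · exact hn.1.1 j' trivial hj'' n' trivial hn'j'
            · exact hj'' ▸ hn'j'
          exact (succOf_not_mem hH hn (Or.inl hn'n)).elim
      · -- j' = n', y₀' = z : then j = n and y₀ = y
        have hjn : j = n := by
          have hjnat : NatIn mem TrueC j := by
            rcases (succOf_spec hH n' j).mp hj with hj₂ | rfl
            · exact nat_mem hsuccnat hj₂
            · exfalso
              have : mem n' n' := (hsucc n' trivial).mpr (Or.inr rfl)
              exact nat_irrefl hsuccnat this
          have he1 : succOf hH j = succOf hH n := (succIn_eq hH hsucc).symm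
          exact nat_succ_inj hH hjnat hn he1
        subst hjn
        rcases (hfval' j y₀).mp h1 with h1' | ⟨hjeq, -⟩
        · have hy₀ : y₀ = y := hf.2.2 j y₀ y trivial trivial trivial h1' hV
          rw [hy₀]
          exact ⟨hstz, hzy⟩
        · exfalso
          have : mem j n' := (succOf_spec hH j j).mpr (Or.inr rfl)
          rw [← hjeq] at this
          exact nat_irrefl hn this
    · intro j y₀ hj h1
      rcases (hfval' j y₀).mp h1 with h1' | ⟨rfl, rfl⟩
      · exact hE j y₀ (fval_dom hH hf h1') h1'
      · exact hstz
    · exact (hfval' n' z).mpr (Or.inr ⟨rfl, rfl⟩)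

lemma stdTC {x0 : M} (hx0 : stP x0) :
    ∃ T, mem x0 T ∧ (∀ z, mem z T → stP z) ∧
      (∀ y, mem y T → ∀ z, stP z → mem z y → mem z T) := by
  obtain ⟨ω, hω⟩ := exists_omega hH
  -- every natural indexes a level set of the chain hierarchy
  have hQ : ∀ m, NatIn mem TrueC m → ∃ b, ∀ w, mem w b ↔ ChainP mem stP m x0 w := by
    refine nat_ind hH _ (fun s => ?_) (fun e he => ?_) (fun k k' hk hsucc hQk => ?_)
    · exact sepN hH ![x0]
        (fun p z => ¬ ∃ b, ∀ w, mem w b ↔ ChainP mem stP z (p 0) w)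
        ((IsDef.ex (IsDef.all ((isDef_mem (Fin.last 3) ((Fin.last 2).castSucc)).iff
          (isDef_chain ((Fin.last 1).castSucc.castSucc)
            ((0 : Fin 1).castSucc.castSucc.castSucc) (Fin.last 3))))).not.congr'
          fun v => by simp only [Fin.snoc_last, Fin.snoc_castSucc]) s
    · refine ⟨sing hH x0, fun w => ?_⟩
      rw [sing_spec hH, chain_zero hH hx0 he]
    · obtain ⟨b, hb⟩ := hQk
      have hk' : k' = succOf hH k := succIn_eq hH hsucc
      subst hk'
      obtain ⟨b', hb'⟩ := sepN hH ![] (fun _ z => stP z) (isDef_st (Fin.last 0)) (sUn hH b)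
      refine ⟨b', fun w => ?_⟩
      rw [hb' w, sUn_spec hH, chain_succ hH hk]
      constructor
      · rintro ⟨⟨y, hyb, hwy⟩, hstw⟩
        exact ⟨y, (hb y).mp hyb, hstw, hwy⟩
      · rintro ⟨y, hch, hstw, hwy⟩
        exact ⟨⟨y, (hb y).mpr hch, hwy⟩, hstw⟩
  -- bound the levels using Collection over ω
  obtain ⟨B1, hB1⟩ := collN hH ![x0]
    (fun p m b => ∀ w, mem w b ↔ ChainP mem stP m (p 0) w)
    ((IsDef.all ((isDef_mem (Fin.last 3) ((Fin.last 2).castSucc)).iff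
      (isDef_chain ((Fin.last 1).castSucc.castSucc)
        ((0 : Fin 1).castSucc.castSucc.castSucc) (Fin.last 3)))).congr'
      fun v => by simp only [Fin.snoc_last, Fin.snoc_castSucc]) ω
  obtain ⟨T, hT⟩ := sepN hH ![ω, x0]
    (fun p z => ∃ m, mem m (p 0) ∧ ChainP mem stP m (p 1) z)
    ((IsDef.ex ((isDef_mem (Fin.last 3) ((0 : Fin 2).castSucc.castSucc)).and
      (isDef_chain (Fin.last 3) ((1 : Fin 2).castSucc.castSucc)
        ((Fin.last 2).castSucc)))).congr'
      fun v => by simp only [Fin.snoc_last, Fin.snoc_castSucc]) (sUn hH B1)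
  have hlevel : ∀ m, mem m ω → ∀ w, ChainP mem stP m x0 w → mem w (sUn hH B1) := by
    intro m hm w hch
    obtain ⟨b, hbB, hb⟩ := hB1 m hm (hQ m ((hω m).mp hm))
    exact (sUn_spec hH B1 w).mpr ⟨b, hbB, (hb w).mpr hch⟩
  have hemptyω : mem (emptyM hH) ω := (hω _).mpr (nat_of_empty (emptyM_empty hH))
  refine ⟨T, ?_, ?_, ?_⟩
  · refine (hT x0).mpr ⟨?_, emptyM hH, hemptyω, ?_⟩
    · exact hlevel (emptyM hH) hemptyω x0 ((chain_zero hH hx0 (emptyM_empty hH) x0).mpr rfl)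
    · exact (chain_zero hH hx0 (emptyM_empty hH) x0).mpr rfl
  · intro z hz
    obtain ⟨-, m, -, hch⟩ := (hT z).mp hz
    exact chain_st hch
  · intro y hy z hstz hzy
    obtain ⟨-, m, hmω, hch⟩ := (hT y).mp hy
    have hmn : NatIn mem TrueC m := (hω m).mp hmω
    have hch' : ChainP mem stP (succOf hH m) x0 z := (chain_succ hH hmn z).mpr ⟨y, hch, hstz, hzy⟩
    have hsuccω : mem (succOf hH m) ω := (hω _).mpr (nat_succ hH hmn)
    exact (hT z).mpr ⟨hlevel _ hsuccω z hch', succOf hH m, hsuccω, hch'⟩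

/-! #### Foundation over the standard universe, attempts, the condensation map -/

lemma sFound (Q : M → Prop)
    (hsep : ∀ s : M, ∃ Y, ∀ z, mem z Y ↔ (mem z s ∧ (stP z ∧ Q z)))
    {x0 : M} (hx0 : stP x0) (hQ0 : Q x0) :
    ∃ y, stP y ∧ Q y ∧ ∀ z, stP z → mem z y → ¬ Q z := by
  obtain ⟨T, hx0T, hTst, hTcl⟩ := stdTC hH hx0
  obtain ⟨Yset, hY⟩ := hsep T
  obtain ⟨B, hBst, hB⟩ := hH.standardization Yset
  have hx0B : mem x0 B := (hB x0 hx0).mpr ((hY x0).mpr ⟨hx0T, hx0, hQ0⟩)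
  obtain ⟨y, hyst, hyB, hymin⟩ := hH.zfc_st.foundation B hBst ⟨x0, hx0, hx0B⟩
  obtain ⟨hyT, -, hyQ⟩ := (hY y).mp ((hB y hyst).mp hyB)
  refine ⟨y, hyst, hyQ, fun z hzst hzy hQz => ?_⟩
  have hzT : mem z T := hTcl y hyT z hzst hzy
  exact hymin z hzst hzy ((hB z hzst).mpr ((hY z).mpr ⟨hzT, hzst, hQz⟩))

lemma st_irrefl {x : M} (hx : stP x) : ¬ mem x x := by
  intro hxx
  obtain ⟨y, hyst, hyQ, hymin⟩ := sFound hH (fun z => z = x)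
    (fun s => sepN hH ![x] (fun p z => stP z ∧ z = p 0)
      (((isDef_st (Fin.last 1)).and
        (isDef_eq (Fin.last 1) ((0 : Fin 1).castSucc))).congr' fun v => Iff.rfl) s)
    hx rfl
  subst hyQ
  exact hymin y hyst hxx rfl

lemma att_dom_st {f x y : M} (hf : Att mem stP f) (h : FValIn mem TrueC f x y) : stP x := by
  obtain ⟨p, -, hp, hop⟩ := h
  obtain ⟨a, b, hsta, hab⟩ := hf.1 p hp
  rw [(opairIn_inj hH hop hab).1]
  exact hsta

lemma att_val_unique {f g x y y' : M} (hf : Att mem stP f) (hg : Att mem stP g)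
    (h1 : FValIn mem TrueC f x y) (h2 : FValIn mem TrueC g x y') : y = y' := by
  by_contra hne
  have hQ0 : ∃ a b, FValIn mem TrueC f x a ∧ FValIn mem TrueC g x b ∧ a ≠ b :=
    ⟨y, y', h1, h2, hne⟩
  obtain ⟨m, hmst, ⟨a, b, h1m, h2m, hab⟩, hmin⟩ := sFound hH
    (fun u => ∃ a b, FValIn mem TrueC f u a ∧ FValIn mem TrueC g u b ∧ a ≠ b)
    (fun s => sepN hH ![f, g]
      (fun p z => stP z ∧ ∃ a b, FValIn mem TrueC (p 0) z a ∧
        FValIn mem TrueC (p 1) z b ∧ ¬ a = b)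
      (((isDef_st (Fin.last 2)).and (IsDef.ex (IsDef.ex
        ((isDef_fval ((0 : Fin 2).castSucc.castSucc.castSucc)
            ((Fin.last 2).castSucc.castSucc) ((Fin.last 3).castSucc)).and
         ((isDef_fval ((1 : Fin 2).castSucc.castSucc.castSucc)
            ((Fin.last 2).castSucc.castSucc) (Fin.last 4)).and
          ((isDef_eq ((Fin.last 3).castSucc) (Fin.last 4)).not)))))).congr'
        fun v => by simp only [Fin.snoc_last, Fin.snoc_castSucc]) s)
    (att_dom_st hH hf h1) hQ0
  refine hab (eq_of_mem_iff hH fun w => ?_)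
  have hagree : ∀ u vf vg, stP u → mem u m → FValIn mem TrueC f u vf →
      FValIn mem TrueC g u vg → vf = vg := by
    intro u vf vg hust hum hvf hvg
    by_contra hne'
    exact hmin u hust hum ⟨vf, vg, hvf, hvg, hne'⟩
  rw [hf.2.2.2 m a w h1m, hg.2.2.2 m b w h2m]
  constructor
  · rintro ⟨u, vv, hust, hum, hfv, hwv⟩
    obtain ⟨vg, hvg⟩ := hg.2.2.1 m b u h2m hust hum
    exact ⟨u, vg, hust, hum, hvg, hwv.trans (hagree u vv vg hust hum hfv hvg)⟩
  · rintro ⟨u, vv, hust, hum, hgv, hwv⟩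
    obtain ⟨vf, hvf⟩ := hf.2.2.1 m a u h1m hust hum
    exact ⟨u, vf, hust, hum, hvf, hwv.trans (hagree u vf vv hust hum hvf hgv).symm⟩

lemma att_total {x : M} (hx : stP x) : ∃ f, Att mem stP f ∧ ∃ y, FValIn mem TrueC f x y := by
  by_contra hno
  obtain ⟨m, hmst, hmQ, hmin⟩ := sFound hH
    (fun u => ¬ ∃ f, Att mem stP f ∧ ∃ y, FValIn mem TrueC f u y)
    (fun s => sepN hH ![]
      (fun _ z => stP z ∧ ¬ ∃ f, Att mem stP f ∧ ∃ y, FValIn mem TrueC f z y)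
      (((isDef_st (Fin.last 0)).and
        ((IsDef.ex ((isDef_att (Fin.last 1)).and
          (IsDef.ex (isDef_fval ((Fin.last 1).castSucc)
            ((Fin.last 0).castSucc.castSucc) (Fin.last 2))))).not)).congr'
        fun v => by simp only [Fin.snoc_last, Fin.snoc_castSucc]) s)
    hx hno
  -- every standard element of m is covered by some attempt
  have hcov0 : ∀ u, stP u → mem u m → ∃ f, Att mem stP f ∧ ∃ y, FValIn mem TrueC f u y := by
    intro u hust hum
    by_contra hq
    exact hmin u hust hum hq
  obtain ⟨σm, hσ⟩ := sepN hH ![] (fun _ z => stP z) (isDef_st (Fin.last 0)) m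
  obtain ⟨B, hB⟩ := collN hH ![]
    (fun _ u f => Att mem stP f ∧ ∃ y, FValIn mem TrueC f u y)
    (((isDef_att (Fin.last 1)).and
      (IsDef.ex (isDef_fval ((Fin.last 1).castSucc)
        ((Fin.last 0).castSucc.castSucc) (Fin.last 2)))).congr'
      fun v => by simp only [Fin.snoc_last, Fin.snoc_castSucc]) σm
  obtain ⟨B0, hB0⟩ := sepN hH ![] (fun _ z => Att mem stP z) ((isDef_att (Fin.last 0)).congr'
    fun v => Iff.rfl) B
  set fs := sUn hH B0 with hfs
  have hfval : ∀ a b, FValIn mem TrueC fs a b ↔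
      ∃ g, mem g B0 ∧ FValIn mem TrueC g a b := by
    intro a b
    rw [fval_iff hH, hfs, sUn_spec hH]
    constructor
    · rintro ⟨g, hg, hm⟩
      exact ⟨g, hg, (fval_iff hH).mpr hm⟩
    · rintro ⟨g, hg, hm⟩
      exact ⟨g, hg, (fval_iff hH).mp hm⟩
  have hattB0 : ∀ g, mem g B0 → Att mem stP g := fun g hg => ((hB0 g).mp hg).2
  have hattfs : Att mem stP fs := by
    refine ⟨?_, ?_, ?_, ?_⟩
    · intro q hq
      obtain ⟨g, hg, hqg⟩ := (sUn_spec hH B0 q).mp hq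
      exact (hattB0 g hg).1 q hqg
    · intro a b b' h1 h2
      obtain ⟨g1, hg1, h1'⟩ := (hfval a b).mp h1
      obtain ⟨g2, hg2, h2'⟩ := (hfval a b').mp h2
      exact att_val_unique hH (hattB0 g1 hg1) (hattB0 g2 hg2) h1' h2'
    · intro a b u h1 hust hua
      obtain ⟨g, hg, h1'⟩ := (hfval a b).mp h1
      obtain ⟨v, hv⟩ := (hattB0 g hg).2.2.1 a b u h1' hust hua
      exact ⟨v, (hfval u v).mpr ⟨g, hg, hv⟩⟩
    · intro a b w h1
      obtain ⟨g, hg, h1'⟩ := (hfval a b).mp h1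
      rw [(hattB0 g hg).2.2.2 a b w h1']
      constructor
      · rintro ⟨u, v, hust, hua, hguv, hwv⟩
        exact ⟨u, v, hust, hua, (hfval u v).mpr ⟨g, hg, hguv⟩, hwv⟩
      · rintro ⟨u, v, hust, hua, hfuv, hwv⟩
        obtain ⟨v0, hv0⟩ := (hattB0 g hg).2.2.1 a b u h1' hust hua
        obtain ⟨g', hg', hguv⟩ := (hfval u v).mp hfuv
        have : v = v0 := att_val_unique hH (hattB0 g' hg') (hattB0 g hg) hguv hv0
        exact ⟨u, v0, hust, hua, hv0, hwv.trans this⟩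
  have hcov : ∀ u, stP u → mem u m → ∃ v, FValIn mem TrueC fs u v := by
    intro u hust hum
    have huσ : mem u σm := (hσ u).mpr ⟨hum, hust⟩
    obtain ⟨g, hgB, hgatt, v, hv⟩ := hB u huσ (hcov0 u hust hum)
    exact ⟨v, (hfval u v).mpr ⟨g, (hB0 g).mpr ⟨hgB, hgatt⟩, hv⟩⟩
  have hnotfs : ¬ ∃ v, FValIn mem TrueC fs m v := by
    intro ⟨v, hv⟩
    exact hmQ ⟨fs, hattfs, v, hv⟩
  -- form the value at m and extend
  obtain ⟨y0, hy0⟩ := replN hH ![fs]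
    (fun p u v => FValIn mem TrueC (p 0) u v ∧ ∀ v', FValIn mem TrueC (p 0) u v' → v' = v)
    (((isDef_fval ((0 : Fin 1).castSucc.castSucc) ((Fin.last 1).castSucc)
        (Fin.last 2)).and
      (IsDef.all ((isDef_fval ((0 : Fin 1).castSucc.castSucc.castSucc)
          ((Fin.last 1).castSucc.castSucc) (Fin.last 3)).imp
        (isDef_eq (Fin.last 3) ((Fin.last 2).castSucc))))).congr'
      fun v => by simp only [Fin.snoc_last, Fin.snoc_castSucc])
    (fun a b b' h1 h2 => h2.2 b h1.1) σm
  set f' := bUn hH fs (sing hH (oPair hH m y0)) with hf'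
  have hfval' : ∀ a b, FValIn mem TrueC f' a b ↔
      (FValIn mem TrueC fs a b ∨ (a = m ∧ b = y0)) := by
    intro a b
    rw [fval_iff hH, hf', bUn_spec hH, sing_spec hH, ← fval_iff hH]
    constructor
    · rintro (h1 | h1)
      · exact Or.inl h1
      · exact Or.inr (oPair_inj hH h1)
    · rintro (h1 | ⟨rfl, rfl⟩)
      · exact Or.inl h1
      · exact Or.inr rfl
  have hattf' : Att mem stP f' := by
    refine ⟨?_, ?_, ?_, ?_⟩
    · intro q hq
      rcases (bUn_spec hH _ _ q).mp hq with hq' | hq'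
      · exact hattfs.1 q hq'
      · have := (sing_spec hH _ _).mp hq'
        subst this
        exact ⟨m, y0, hmst, oPair_is_opair hH m y0⟩
    · intro a b b' h1 h2
      rcases (hfval' a b).mp h1 with h1' | ⟨ha1, hb1⟩
      · rcases (hfval' a b').mp h2 with h2' | ⟨ha2, hb2⟩
        · exact hattfs.2.1 a b b' h1' h2'
        · exact absurd ⟨b, ha2 ▸ h1'⟩ hnotfs
      · rcases (hfval' a b').mp h2 with h2' | ⟨ha2, hb2⟩
        · exact absurd ⟨b', ha1 ▸ h2'⟩ hnotfs
        · rw [hb1, hb2]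
    · intro a b u h1 hust hua
      rcases (hfval' a b).mp h1 with h1' | ⟨ha1, hb1⟩
      · obtain ⟨v, hv⟩ := hattfs.2.2.1 a b u h1' hust hua
        exact ⟨v, (hfval' u v).mpr (Or.inl hv)⟩
      · obtain ⟨v, hv⟩ := hcov u hust (ha1 ▸ hua)
        exact ⟨v, (hfval' u v).mpr (Or.inl hv)⟩
    · intro a b w h1
      rcases (hfval' a b).mp h1 with h1' | ⟨ha1, hb1⟩
      · rw [hattfs.2.2.2 a b w h1']
        constructor
        · rintro ⟨u, v, hust, hua, hguv, hwv⟩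
          exact ⟨u, v, hust, hua, (hfval' u v).mpr (Or.inl hguv), hwv⟩
        · rintro ⟨u, v, hust, hua, hfuv, hwv⟩
          rcases (hfval' u v).mp hfuv with hf1 | ⟨hu1, hv1⟩
          · exact ⟨u, v, hust, hua, hf1, hwv⟩
          · exfalso
            obtain ⟨v0, hv0⟩ := hattfs.2.2.1 a b m h1' hmst (hu1 ▸ hua)
            exact hnotfs ⟨v0, hv0⟩
      · subst ha1; subst hb1
        constructor
        · intro hw
          obtain ⟨u, huσ, hfu, -⟩ := (hy0 w).mp hw
          obtain ⟨hum, hust⟩ := (hσ u).mp huσ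
          exact ⟨u, w, hust, hum, (hfval' u w).mpr (Or.inl hfu), rfl⟩
        · rintro ⟨u, v, hust, hua, hfuv, hwv⟩
          rcases (hfval' u v).mp hfuv with hf1 | ⟨hu1, hv1⟩
          · refine (hy0 w).mpr ⟨u, (hσ u).mpr ⟨hua, hust⟩, hwv ▸ hf1, ?_⟩
            intro v' hv'
            exact (hattfs.2.1 u v' v hv' hf1).trans hwv.symm
          · exact absurd (hu1 ▸ hua) (st_irrefl hH hmst)
  exact hmQ ⟨f', hattf', y0, (hfval' m y0).mpr (Or.inr ⟨rfl, rfl⟩)⟩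

open scoped Classical in
omit hH in
noncomputable def hmap (mem : M → M → Prop) (stP : M → Prop) : M → M := fun x =>
  if hx : ∃ z, Cnd mem stP x z then hx.choose else x

lemma cnd_unique {x z z' : M} (h1 : Cnd mem stP x z) (h2 : Cnd mem stP x z') : z = z' := by
  obtain ⟨f, hf, hv⟩ := h1
  obtain ⟨g, hg, hv'⟩ := h2
  exact att_val_unique hH hf hg hv hv'

lemma hmap_cnd {x : M} (hx : stP x) : Cnd mem stP x (hmap mem stP x) := by
  have hex : ∃ z, Cnd mem stP x z := by
    obtain ⟨f, hf, y, hy⟩ := att_total hH hx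
    exact ⟨y, f, hf, hy⟩
  simp only [hmap, dif_pos hex]
  exact hex.choose_spec

lemma hmap_eq {x z : M} (h : Cnd mem stP x z) : hmap mem stP x = z := by
  have hex : ∃ z, Cnd mem stP x z := ⟨z, h⟩
  simp only [hmap, dif_pos hex]
  exact cnd_unique hH hex.choose_spec h

lemma hmap_mem {x : M} (hx : stP x) (w : M) :
    mem w (hmap mem stP x) ↔ ∃ y, stP y ∧ mem y x ∧ w = hmap mem stP y := by
  obtain ⟨f, hf, hv⟩ := hmap_cnd hH hx
  rw [hf.2.2.2 x (hmap mem stP x) w hv]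
  constructor
  · rintro ⟨u, v, hust, hux, hfu, hwv⟩
    exact ⟨u, hust, hux, hwv.trans (hmap_eq hH ⟨f, hf, hfu⟩).symm⟩
  · rintro ⟨y, hyst, hyx, hwy⟩
    obtain ⟨v, hv'⟩ := hf.2.2.1 x (hmap mem stP x) y hv hyst hyx
    exact ⟨y, v, hyst, hyx, hv', hwy.trans (hmap_eq hH ⟨f, hf, hv'⟩)⟩

lemma hmap_condenses : Condenses mem stP (hmap mem stP) :=
  fun x hx z => hmap_mem hH hx z

lemma hmap_inj {x y : M} (hx : stP x) (hy : stP y) (h : hmap mem stP x = hmap mem stP y) :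
    x = y := by
  by_contra hne
  have hQ0 : ∃ v w, stP v ∧ ¬ (v = x) ∧ Cnd mem stP x w ∧ Cnd mem stP v w :=
    ⟨y, hmap mem stP x, hy, fun hyx => hne hyx.symm, hmap_cnd hH hx,
      h ▸ hmap_cnd hH hy⟩
  obtain ⟨m, hmst, ⟨v, w, hvst, hvm, hc1, hc2⟩, hmin⟩ := sFound hH
    (fun u => ∃ v w, stP v ∧ ¬ (v = u) ∧ Cnd mem stP u w ∧ Cnd mem stP v w)
    (fun s => sepN hH ![]
      (fun _ z => stP z ∧ ∃ v w, stP v ∧ ¬ (v = z) ∧ Cnd mem stP z w ∧ Cnd mem stP v w)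
      (((isDef_st (Fin.last 0)).and (IsDef.ex (IsDef.ex
        ((isDef_st ((Fin.last 1).castSucc)).and
         (((isDef_eq ((Fin.last 1).castSucc) ((Fin.last 0).castSucc.castSucc)).not).and
          ((isDef_cnd ((Fin.last 0).castSucc.castSucc) (Fin.last 2)).and
           (isDef_cnd ((Fin.last 1).castSucc) (Fin.last 2)))))))).congr'
        fun v => by simp only [Fin.snoc_last, Fin.snoc_castSucc]) s)
    hx hQ0
  have hmv : hmap mem stP m = hmap mem stP v := (hmap_eq hH hc1).trans (hmap_eq hH hc2).symm
  -- no standard element of m is a counterexample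
  have hbelow : ∀ u u', stP u → mem u m → stP u' →
      hmap mem stP u = hmap mem stP u' → u = u' := by
    intro u u' hust hum hu'st heq
    by_contra hne'
    exact hmin u hust hum ⟨u', hmap mem stP u, hu'st, fun e => hne' e.symm,
      hmap_cnd hH hust, heq ▸ hmap_cnd hH hu'st⟩
  have hsame : ∀ z, stP z → (mem z m ↔ mem z v) := by
    intro z hzst
    constructor
    · intro hzm
      have : mem (hmap mem stP z) (hmap mem stP v) := by
        rw [← hmv]
        exact (hmap_mem hH hmst _).mpr ⟨z, hzst, hzm, rfl⟩
      obtain ⟨u', hu'st, hu'v, heq⟩ := (hmap_mem hH hvst _).mp this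
      rwa [hbelow z u' hzst hzm hu'st heq]
    · intro hzv
      have : mem (hmap mem stP z) (hmap mem stP m) := by
        rw [hmv]
        exact (hmap_mem hH hvst _).mpr ⟨z, hzst, hzv, rfl⟩
      obtain ⟨u, hust, hum, heq⟩ := (hmap_mem hH hmst _).mp this
      rwa [← hbelow u z hust hum hzst heq.symm]
  exact hvm (hH.zfc_st.ext v m hvst hmst fun z hz => (hsame z hz).symm)

lemma hmap_memiso {x y : M} (hx : stP x) (hy : stP y) :
    mem (hmap mem stP x) (hmap mem stP y) ↔ mem x y := by
  constructor
  · intro h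
    obtain ⟨u, hust, huy, heq⟩ := (hmap_mem hH hy _).mp h
    rwa [hmap_inj hH hx hust heq]
  · intro h
    exact (hmap_mem hH hy _).mpr ⟨x, hx, h, rfl⟩

/-! #### The condensed subuniverse -/

omit hH in
lemma hmap_snoc {k : ℕ} (val : Fin k → M) (x : M) :
    (fun i => hmap mem stP ((Fin.snoc val x : Fin (k+1) → M) i)) =
      (Fin.snoc (fun i => hmap mem stP (val i)) (hmap mem stP x) : Fin (k+1) → M) := by
  funext i
  refine Fin.lastCases ?_ (fun j => ?_) i <;>
    simp [Fin.snoc_last, Fin.snoc_castSucc]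

omit hH in
lemma snoc_st {k : ℕ} {val : Fin k → M} {x : M} (hst : ∀ i, stP (val i)) (hx : stP x) :
    ∀ i, stP ((Fin.snoc val x : Fin (k+1) → M) i) := by
  intro i
  refine Fin.lastCases ?_ (fun j => ?_) i <;>
    simp [Fin.snoc_last, Fin.snoc_castSucc, hst, hx]

lemma evalV {k : ℕ} (φ : StFormula k) :
    ∀ (val : Fin k → M), (∀ i, stP (val i)) →
      (EvalIn mem FalseC stP φ val ↔
        EvalIn mem FalseC (CondV stP (hmap mem stP)) φ (fun i => hmap mem stP (val i))) := by
  induction φ with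
  | mem i j =>
    intro val hst
    exact (hmap_memiso hH (hst i) (hst j)).symm
  | eq i j =>
    intro val hst
    constructor
    · intro h
      exact congrArg _ h
    · intro h
      exact hmap_inj hH (hst i) (hst j) h
  | st i =>
    intro val hst
    exact Iff.rfl
  | not φ ih =>
    intro val hst
    exact not_congr (ih val hst)
  | and φ ψ ihφ ihψ =>
    intro val hst
    exact and_congr (ihφ val hst) (ihψ val hst)
  | all φ ih =>
    intro val hst
    constructor
    · intro hl x' hx'
      obtain ⟨x, hxst, rfl⟩ := hx'
      have := (ih (Fin.snoc val x) (snoc_st hst hxst)).mp (hl x hxst)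
      rwa [hmap_snoc] at this
    · intro hl x hxst
      have h1 := hl (hmap mem stP x) ⟨x, hxst, rfl⟩
      rw [← hmap_snoc] at h1
      exact (ih (Fin.snoc val x) (snoc_st hst hxst)).mpr h1

lemma subV_iff {z x : M} (hz : stP z) (hx : stP x) :
    SubIn mem (CondV stP (hmap mem stP)) (hmap mem stP z) (hmap mem stP x) ↔
      SubIn mem stP z x := by
  constructor
  · intro hsub w hwst hwz
    exact (hmap_memiso hH hwst hx).mp
      (hsub (hmap mem stP w) ⟨w, hwst, rfl⟩ ((hmap_memiso hH hwst hz).mpr hwz))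
  · rintro hsub w' ⟨w, hwst, rfl⟩ hmem
    exact (hmap_memiso hH hwst hx).mpr (hsub w hwst ((hmap_memiso hH hwst hz).mp hmem))

lemma hmap_eq_iff {x y : M} (hx : stP x) (hy : stP y) :
    hmap mem stP x = hmap mem stP y ↔ x = y :=
  ⟨hmap_inj hH hx hy, fun h => h ▸ rfl⟩

lemma singV_iff {s x : M} (hs : stP s) (hx : stP x) :
    SingIn mem (CondV stP (hmap mem stP)) (hmap mem stP s) (hmap mem stP x) ↔
      SingIn mem stP s x := by
  constructor
  · intro hsing z hzst
    rw [← hmap_memiso hH hzst hs, hsing (hmap mem stP z) ⟨z, hzst, rfl⟩,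
      hmap_eq_iff hH hzst hx]
  · rintro hsing z' ⟨z, hzst, rfl⟩
    rw [hmap_memiso hH hzst hs, hmap_eq_iff hH hzst hx]
    exact hsing z hzst
lemma upairV_iff {p x y : M} (hp : stP p) (hx : stP x) (hy : stP y) :
    UPairIn mem (CondV stP (hmap mem stP)) (hmap mem stP p) (hmap mem stP x)
        (hmap mem stP y) ↔ UPairIn mem stP p x y := by
  constructor
  · intro hu z hzst
    rw [← hmap_memiso hH hzst hp, hu (hmap mem stP z) ⟨z, hzst, rfl⟩,
      hmap_eq_iff hH hzst hx, hmap_eq_iff hH hzst hy]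
  · rintro hu z' ⟨z, hzst, rfl⟩
    rw [hmap_memiso hH hzst hp, hmap_eq_iff hH hzst hx, hmap_eq_iff hH hzst hy]
    exact hu z hzst

lemma emptyV_iff {e : M} (he : stP e) :
    EmptyIn mem (CondV stP (hmap mem stP)) (hmap mem stP e) ↔ EmptyIn mem stP e := by
  constructor
  · intro hemp z hzst hze
    exact hemp (hmap mem stP z) ⟨z, hzst, rfl⟩ ((hmap_memiso hH hzst he).mpr hze)
  · rintro hemp z' ⟨z, hzst, rfl⟩ hmem
    exact hemp z hzst ((hmap_memiso hH hzst he).mp hmem)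

lemma succV_iff {s x : M} (hs : stP s) (hx : stP x) :
    SuccIn mem (CondV stP (hmap mem stP)) (hmap mem stP s) (hmap mem stP x) ↔
      SuccIn mem stP s x := by
  constructor
  · intro hu z hzst
    rw [← hmap_memiso hH hzst hs, hu (hmap mem stP z) ⟨z, hzst, rfl⟩,
      hmap_eq_iff hH hzst hx, hmap_memiso hH hzst hx]
  · rintro hu z' ⟨z, hzst, rfl⟩
    rw [hmap_memiso hH hzst hs, hmap_eq_iff hH hzst hx, hmap_memiso hH hzst hx]
    exact hu z hzst

lemma opairV_iff {p x y : M} (hp : stP p) (hx : stP x) (hy : stP y) :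
    OPairIn mem (CondV stP (hmap mem stP)) (hmap mem stP p) (hmap mem stP x)
        (hmap mem stP y) ↔ OPairIn mem stP p x y := by
  constructor
  · rintro ⟨s', t', ⟨s, hsst, rfl⟩, ⟨t, htst, rfl⟩, hsing, hupair, hpp⟩
    exact ⟨s, t, hsst, htst, (singV_iff hH hsst hx).mp hsing,
      (upairV_iff hH htst hx hy).mp hupair, (upairV_iff hH hp hsst htst).mp hpp⟩
  · rintro ⟨s, t, hsst, htst, hsing, hupair, hpp⟩
    exact ⟨hmap mem stP s, hmap mem stP t, ⟨s, hsst, rfl⟩, ⟨t, htst, rfl⟩,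
      (singV_iff hH hsst hx).mpr hsing, (upairV_iff hH htst hx hy).mpr hupair,
      (upairV_iff hH hp hsst htst).mpr hpp⟩

lemma opexV_iff {r a b : M} (hr : stP r) (ha : stP a) (hb : stP b) :
    (∃ p, CondV stP (hmap mem stP) p ∧ mem p (hmap mem stP r) ∧
      OPairIn mem (CondV stP (hmap mem stP)) p (hmap mem stP a) (hmap mem stP b)) ↔
    (∃ p, stP p ∧ mem p r ∧ OPairIn mem stP p a b) := by
  constructor
  · rintro ⟨p', -, hpmem, hop⟩
    obtain ⟨p, hpst, hpr, rfl⟩ := (hmap_mem hH hr p').mp hpmem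
    exact ⟨p, hpst, hpr, (opairV_iff hH hpst ha hb).mp hop⟩
  · rintro ⟨p, hpst, hpr, hop⟩
    exact ⟨hmap mem stP p, ⟨p, hpst, rfl⟩, (hmap_memiso hH hpst hr).mpr hpr,
      (opairV_iff hH hpst ha hb).mpr hop⟩

lemma zfcV : ZFCModelIn mem (CondV stP (hmap mem stP)) := by
  constructor
  -- nonemp
  · obtain ⟨c, hc⟩ := hH.zfc_st.nonemp
    exact ⟨hmap mem stP c, c, hc, rfl⟩
  -- ext
  · rintro x' y' ⟨x, hxst, rfl⟩ ⟨y, hyst, rfl⟩ hsame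
    have : x = y := by
      refine hH.zfc_st.ext x y hxst hyst fun z hzst => ?_
      rw [← hmap_memiso hH hzst hxst, ← hmap_memiso hH hzst hyst]
      exact hsame (hmap mem stP z) ⟨z, hzst, rfl⟩
    rw [this]
  -- pair
  · rintro x' y' ⟨x, hxst, rfl⟩ ⟨y, hyst, rfl⟩
    obtain ⟨p, hpst, hp⟩ := hH.zfc_st.pair x y hxst hyst
    exact ⟨hmap mem stP p, ⟨p, hpst, rfl⟩, (upairV_iff hH hpst hxst hyst).mpr hp⟩
  -- union
  · rintro x' ⟨x, hxst, rfl⟩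
    obtain ⟨u, hust, hu⟩ := hH.zfc_st.union x hxst
    refine ⟨hmap mem stP u, ⟨u, hust, rfl⟩, ?_⟩
    rintro z' ⟨z, hzst, rfl⟩
    rw [hmap_memiso hH hzst hust, hu z hzst]
    constructor
    · rintro ⟨y, hyst, hyx, hzy⟩
      exact ⟨hmap mem stP y, ⟨y, hyst, rfl⟩, (hmap_memiso hH hyst hxst).mpr hyx,
        (hmap_memiso hH hzst hyst).mpr hzy⟩
    · rintro ⟨y', ⟨y, hyst, rfl⟩, hyx, hzy⟩
      exact ⟨y, hyst, (hmap_memiso hH hyst hxst).mp hyx, (hmap_memiso hH hzst hyst).mp hzy⟩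
  -- power
  · rintro x' ⟨x, hxst, rfl⟩
    obtain ⟨pw, hpwst, hpw⟩ := hH.zfc_st.power x hxst
    refine ⟨hmap mem stP pw, ⟨pw, hpwst, rfl⟩, ?_⟩
    rintro z' ⟨z, hzst, rfl⟩
    rw [hmap_memiso hH hzst hpwst, hpw z hzst, ← subV_iff hH hzst hxst]
  -- infinity
  · obtain ⟨w, hwst, ⟨e, hest, hew, hee⟩, hsucc⟩ := hH.zfc_st.infinity
    refine ⟨hmap mem stP w, ⟨w, hwst, rfl⟩,
      ⟨hmap mem stP e, ⟨e, hest, rfl⟩, (hmap_memiso hH hest hwst).mpr hew,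
        (emptyV_iff hH hest).mpr hee⟩, ?_⟩
    rintro x' ⟨x, hxst, rfl⟩ hxw
    obtain ⟨s, hsst, hsw, hss⟩ := hsucc x hxst ((hmap_memiso hH hxst hwst).mp hxw)
    exact ⟨hmap mem stP s, ⟨s, hsst, rfl⟩, (hmap_memiso hH hsst hwst).mpr hsw,
      (succV_iff hH hsst hxst).mpr hss⟩
  -- foundation
  · rintro x' ⟨x, hxst, rfl⟩ ⟨y', -, hy'⟩
    obtain ⟨y, hyst, hyx, -⟩ := (hmap_mem hH hxst y').mp hy'
    obtain ⟨b, hbst, hbx, hbmin⟩ := hH.zfc_st.foundation x hxst ⟨y, hyst, hyx⟩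
    refine ⟨hmap mem stP b, ⟨b, hbst, rfl⟩, (hmap_memiso hH hbst hxst).mpr hbx, ?_⟩
    rintro z' - hz'b hz'x
    obtain ⟨z, hzst, hzb, rfl⟩ := (hmap_mem hH hbst z').mp hz'b
    exact hbmin z hzst hzb ((hmap_memiso hH hzst hxst).mp hz'x)
  -- separation
  · intro n φ hφ val hval x' hx'
    obtain ⟨sx, hsxst, rfl⟩ := hx'
    have hsst : ∀ i, stP ((hval i).choose) := fun i => (hval i).choose_spec.1
    have hveq : val = fun i => hmap mem stP ((hval i).choose) :=
      funext fun i => (hval i).choose_spec.2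
    obtain ⟨s, hsst', hs⟩ := hH.zfc_st.separation φ hφ (fun i => (hval i).choose) hsst sx hsxst
    refine ⟨hmap mem stP s, ⟨s, hsst', rfl⟩, ?_⟩
    rintro z' ⟨z, hzst, rfl⟩
    have hEval : EvalIn mem FalseC stP φ (Fin.snoc (fun i => (hval i).choose) z) ↔
        EvalIn mem FalseC (CondV stP (hmap mem stP)) φ (Fin.snoc val (hmap mem stP z)) := by
      have := evalV hH φ (Fin.snoc (fun i => (hval i).choose) z) (snoc_st hsst hzst)
      rw [hmap_snoc] at this
      rw [this, ← hveq]
    rw [hmap_memiso hH hzst hsst', hs z hzst, hmap_memiso hH hzst hsxst, hEval]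
  -- collection
  · intro n φ hφ val hval x' hx'
    obtain ⟨sx, hsxst, rfl⟩ := hx'
    have hsst : ∀ i, stP ((hval i).choose) := fun i => (hval i).choose_spec.1
    have hveq : val = fun i => hmap mem stP ((hval i).choose) :=
      funext fun i => (hval i).choose_spec.2
    obtain ⟨B, hBst, hB⟩ := hH.zfc_st.collection φ hφ (fun i => (hval i).choose) hsst sx hsxst
    have hEval2 : ∀ a b : M, stP a → stP b →
        (EvalIn mem FalseC stP φ (Fin.snoc (Fin.snoc (fun i => (hval i).choose) a) b) ↔
         EvalIn mem FalseC (CondV stP (hmap mem stP)) φ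
           (Fin.snoc (Fin.snoc val (hmap mem stP a)) (hmap mem stP b))) := by
      intro a b ha hb
      have := evalV hH φ (Fin.snoc (Fin.snoc (fun i => (hval i).choose) a) b)
        (snoc_st (snoc_st hsst ha) hb)
      rw [hmap_snoc, hmap_snoc] at this
      rw [this, ← hveq]
    refine ⟨hmap mem stP B, ⟨B, hBst, rfl⟩, ?_⟩
    rintro a' ⟨a, hast, rfl⟩ hax hex
    obtain ⟨b', ⟨b, hbst, rfl⟩, hEv'⟩ := hex
    obtain ⟨b0, hb0st, hb0B, hEv0⟩ := hB a hast ((hmap_memiso hH hast hsxst).mp hax)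
      ⟨b, hbst, (hEval2 a b hast hbst).mpr hEv'⟩
    exact ⟨hmap mem stP b0, ⟨b0, hb0st, rfl⟩, (hmap_memiso hH hb0st hBst).mpr hb0B,
      (hEval2 a b0 hast hb0st).mp hEv0⟩
  -- choice_wo
  · rintro x' ⟨x, hxst, rfl⟩
    obtain ⟨r, hrst, hwo⟩ := hH.zfc_st.choice_wo x hxst
    refine ⟨hmap mem stP r, ⟨r, hrst, rfl⟩, ?_, ?_, ?_, ?_⟩
    · rintro a' b' - - ha' hb' hne
      obtain ⟨a, hast, hax, rfl⟩ := (hmap_mem hH hxst a').mp ha'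
      obtain ⟨b, hbst, hbx, rfl⟩ := (hmap_mem hH hxst b').mp hb'
      have hab : a ≠ b := fun e => hne (e ▸ rfl)
      rcases hwo.1 a b hast hbst hax hbx hab with hp | hp
      · exact Or.inl ((opexV_iff hH hrst hast hbst).mpr hp)
      · exact Or.inr ((opexV_iff hH hrst hbst hast).mpr hp)
    · rintro a' - ha' hp
      obtain ⟨a, hast, hax, rfl⟩ := (hmap_mem hH hxst a').mp ha'
      exact hwo.2.1 a hast hax ((opexV_iff hH hrst hast hast).mp hp)
    · rintro a' b' c' ⟨a, hast, rfl⟩ ⟨b, hbst, rfl⟩ ⟨c, hcst, rfl⟩ h1 h2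
      exact (opexV_iff hH hrst hast hcst).mpr (hwo.2.2.1 a b c hast hbst hcst
        ((opexV_iff hH hrst hast hbst).mp h1) ((opexV_iff hH hrst hbst hcst).mp h2))
    · rintro Y' ⟨Z, hZst, rfl⟩ hsub ⟨w', -, hw'⟩
      obtain ⟨w, hwst, hwZ, -⟩ := (hmap_mem hH hZst w').mp hw'
      obtain ⟨a, hast, haZ, hamin⟩ := hwo.2.2.2 Z hZst ((subV_iff hH hZst hxst).mp hsub)
        ⟨w, hwst, hwZ⟩
      refine ⟨hmap mem stP a, ⟨a, hast, rfl⟩, (hmap_memiso hH hast hZst).mpr haZ, ?_⟩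
      rintro b' - hb' hne
      obtain ⟨b, hbst, hbZ, rfl⟩ := (hmap_mem hH hZst b').mp hb'
      have hba : b ≠ a := fun e => hne (e ▸ rfl)
      exact (opexV_iff hH hrst hast hbst).mpr (hamin b hbst hbZ hba)

lemma subsetV (X : M) (hX : ∀ z, mem z X → CondV stP (hmap mem stP) z) :
    CondV stP (hmap mem stP) X := by
  obtain ⟨B, hB⟩ := collN hH ![] (fun _ b y => stP y ∧ Cnd mem stP y b)
    (((isDef_st (Fin.last 1)).and
      (isDef_cnd (Fin.last 1) ((Fin.last 0).castSucc))).congr' fun v => Iff.rfl) X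
  obtain ⟨W0, hW0⟩ := sepN hH ![X]
    (fun p y => stP y ∧ ∃ b, mem b (p 0) ∧ Cnd mem stP y b)
    (((isDef_st (Fin.last 1)).and
      (IsDef.ex ((isDef_mem (Fin.last 2) ((0 : Fin 1).castSucc.castSucc)).and
        (isDef_cnd ((Fin.last 1).castSucc) (Fin.last 2))))).congr'
      fun v => by simp only [Fin.snoc_last, Fin.snoc_castSucc]) B
  obtain ⟨Y, hYst, hY⟩ := hH.standardization W0
  refine ⟨Y, hYst, (eq_of_mem_iff hH fun w => ?_).symm⟩
  rw [hmap_mem hH hYst w]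
  constructor
  · rintro ⟨z, hzst, hzY, rfl⟩
    obtain ⟨-, -, b, hbX, hcnd⟩ := (hW0 z).mp ((hY z hzst).mp hzY)
    rwa [hmap_eq hH hcnd]
  · intro hwX
    obtain ⟨y, hyB, hyst, hycnd⟩ := hB w hwX (by
      obtain ⟨u, hust, rfl⟩ := hX w hwX
      exact ⟨u, hust, hmap_cnd hH hust⟩)
    refine ⟨y, hyst, (hY y hyst).mpr ((hW0 y).mpr ⟨hyB, hyst, w, hwX, hycnd⟩), ?_⟩
    exact (hmap_eq hH hycnd).symm

end WithModel

end CondAux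

/-- In any model of HST there is a condensation map
`x ↦ x̂` which is an `∈`-isomorphism of the class of standard sets onto the
condensed subuniverse `V`; `V` is transitive, is an `∈`-model of ZFC, and every
subset of `V` (which is a set of the model) belongs to `V`. -/
theorem condensation_iso_zfc {M : Type u} (mem : M → M → Prop) (stP : M → Prop)
    (hH : HSTModel mem stP) :
    ∃ h : M → M, Condenses mem stP h ∧
      (∀ x y, stP x → stP y → (h x = h y ↔ x = y)) ∧
      (∀ x y, stP x → stP y → (mem (h x) (h y) ↔ mem x y)) ∧
      (∀ z u, CondV stP h z → mem u z → CondV stP h u) ∧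
      ZFCModelIn mem (CondV stP h) ∧
      (∀ X : M, (∀ z, mem z X → CondV stP h z) → CondV stP h X) := by
  refine ⟨hmap mem stP, hmap_condenses hH, fun x y hx hy => hmap_eq_iff hH hx hy,
    fun x y hx hy => hmap_memiso hH hx hy, ?_, zfcV hH, subsetV hH⟩
  rintro z u ⟨a, ha, rfl⟩ hu
  obtain ⟨y, hyst, -, rfl⟩ := (hmap_mem hH ha u).mp hu
  exact ⟨y, hyst, rfl⟩

end HSTF
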